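/- arXiv:1512.00361 — 7 statements merged into one kernel-verified Lean document; each statement's English description precedes it below -/
import Mathlib

section
/- Let G be a finite group and let S be a separating set of the intersection graph Γ(G) that is minimal (no proper subset of S is separating). If Γ(G) is not a complete graph, then S is upward closed: if H ∈ S and H ≤ K < G with K non-trivial, then K ∈ S. -/
/-- The intersection graph of a group `G`: vertices are the proper non-trivial
subgroups, with an edge between two distinct subgroups whose intersection is
non-trivial. -/
def interGraph (G : Type*) [Group G] :
    SimpleGraph {H : Subgroup G // H ≠ ⊥ ∧ H ≠ ⊤} where
  Adj A B := A ≠ B ∧ A.1 ⊓ B.1 ≠ ⊥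
  symm := by
    constructor
    rintro A B ⟨h1, h2⟩
    exact ⟨h1.symm, by rwa [inf_comm]⟩
  loopless := by constructor; rintro A ⟨h1, _⟩; exact h1 rfl

/-- `S` is a separating set of `Γ`: after removing the vertices of `S`, some
two remaining vertices are not joined by a path. -/
def IsSepSet {V : Type*} (Γ : SimpleGraph V) (S : Set V) : Prop :=
  ∃ a b : ↥(Sᶜ), ¬ (Γ.induce Sᶜ).Reachable a b

/-- A graph is `k`-connected if it has more than `k` vertices and no
separating set of cardinality `< k`. -/
def KConnected {V : Type*} (Γ : SimpleGraph V) (k : ℕ) : Prop :=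
  k < Nat.card V ∧ ∀ S : Set V, IsSepSet Γ S → k ≤ Nat.card S

/-- A minimal subgroup: a minimal element of the poset of non-trivial subgroups. -/
def IsMinimalSubgroup {G : Type*} [Group G] (A : Subgroup G) : Prop :=
  A ≠ ⊥ ∧ ∀ K : Subgroup G, K ≠ ⊥ → K ≤ A → K = A

/-- There exist (at least) `k` pairwise internally independent paths from `u` to `v`. -/
def HasIndepPaths {V : Type*} (Γ : SimpleGraph V) (u v : V) (k : ℕ) : Prop :=
  ∃ p : Fin k → Γ.Walk u v, (∀ i, (p i).IsPath) ∧
    ∀ i j, i ≠ j → ∀ x ∈ (p i).support, x ∈ (p j).support → x = u ∨ x = v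

/-- A finite group is supersolvable if it has a normal series (all terms normal
in the whole group) whose successive factors are of prime order. -/
def IsSupersolvable (G : Type*) [Group G] : Prop :=
  ∃ (n : ℕ) (s : Fin (n + 1) → Subgroup G), s 0 = ⊥ ∧ s (Fin.last n) = ⊤ ∧
    (∀ i, (s i).Normal) ∧
    ∀ i : Fin n, s i.castSucc ≤ s i.succ ∧ ((s i.castSucc).relIndex (s i.succ)).Prime

/-!
If `H ∈ S` but some `K ≥ H` lay outside `S`, then by minimality any two vertices outside `S` would
be joined by a path avoiding `S \ {H}`. Every neighbour of `H` other than `K` meets `H`, hence `K`,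
non-trivially, so replacing `H` by `K` along that path yields a walk avoiding `S`, and `S` would
not separate.
-/

namespace SimpleGraph

variable {V W : Type*} {Γ : SimpleGraph V} {Δ : SimpleGraph W}

theorem Reachable.map_of_adj_reachable (f : V → W)
    (hf : ∀ x y, Γ.Adj x y → Δ.Reachable (f x) (f y)) {x y : V} (h : Γ.Reachable x y) :
    Δ.Reachable (f x) (f y) := by
  rw [reachable_iff_reflTransGen] at h ⊢
  exact h.lift' f fun a b hab => (reachable_iff_reflTransGen _ _).mp (hf a b hab)

end SimpleGraph

section

open SimpleGraph

variable {V : Type*} {Γ : SimpleGraph V}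

theorem IsSepSet.mem_of_forall_adj {S : Set V} {v w : V} (hS : IsSepSet Γ S) (hv : v ∈ S)
    (hmin : ¬ IsSepSet Γ (S \ {v})) (hvw : ∀ u, Γ.Adj v u → u ≠ w → Γ.Adj w u) : w ∈ S := by
  classical
  by_contra hwS
  obtain ⟨a, b, hab⟩ := hS
  simp only [IsSepSet, not_exists, not_not] at hmin
  let φ : ↥(S \ {v})ᶜ → ↥Sᶜ := fun x =>
    if hx : x.1 = v then ⟨w, hwS⟩ else ⟨x.1, fun h => x.2 ⟨h, hx⟩⟩
  have hφ_v : ∀ x, x.1 = v → (φ x).1 = w := fun x hx => by simp [φ, hx]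
  have hφ_ne : ∀ x, x.1 ≠ v → (φ x).1 = x.1 := fun x hx => by simp [φ, hx]
  have from_v : ∀ x y : ↥(S \ {v})ᶜ, x.1 = v → Γ.Adj x.1 y.1 →
      (Γ.induce Sᶜ).Reachable (φ x) (φ y) := by
    intro x y hx hxy
    have hy : y.1 ≠ v := fun h => Γ.ne_of_adj hxy (hx.trans h.symm)
    by_cases hyw : y.1 = w
    · rw [Subtype.ext <| (hφ_v x hx).trans ((hφ_ne y hy).trans hyw).symm]
    · refine Adj.reachable <| induce_adj.2 ?_
      rw [hφ_v x hx, hφ_ne y hy]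
      exact hvw y.1 (hx.subst (motive := (Γ.Adj · y.1)) hxy) hyw
  have hφ : ∀ x y, (Γ.induce (S \ {v})ᶜ).Adj x y → (Γ.induce Sᶜ).Reachable (φ x) (φ y) := by
    intro x y hxy
    rw [induce_adj] at hxy
    by_cases hx : x.1 = v
    · exact from_v x y hx hxy
    by_cases hy : y.1 = v
    · exact (from_v y x hy hxy.symm).symm
    · refine Adj.reachable <| induce_adj.2 ?_
      rwa [hφ_ne x hx, hφ_ne y hy]
  have hφ_lift : ∀ x : ↥Sᶜ, φ ⟨x.1, fun h => x.2 h.1⟩ = x := fun x =>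
    Subtype.ext <| hφ_ne _ fun h => x.2 (h ▸ hv)
  have := (hmin ⟨a.1, fun h => a.2 h.1⟩ ⟨b.1, fun h => b.2 h.1⟩).map_of_adj_reachable φ hφ
  exact hab <| by rwa [hφ_lift, hφ_lift] at this

end

theorem interGraph_adj_of_le {G : Type*} [Group G] {H K L : {H : Subgroup G // H ≠ ⊥ ∧ H ≠ ⊤}}
    (hHK : H.1 ≤ K.1) (hHL : (interGraph G).Adj H L) (hLK : L ≠ K) : (interGraph G).Adj K L :=
  ⟨hLK.symm, fun h => hHL.2 <| le_bot_iff.mp <| (inf_le_inf_right _ hHK).trans_eq h⟩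

theorem stmt1_general (G : Type*) [Group G]
    (S : Set {H : Subgroup G // H ≠ ⊥ ∧ H ≠ ⊤})
    (hS : IsSepSet (interGraph G) S)
    (hmin : ∀ T ⊂ S, ¬ IsSepSet (interGraph G) T) :
    ∀ H ∈ S, ∀ K : {H : Subgroup G // H ≠ ⊥ ∧ H ≠ ⊤}, H.1 ≤ K.1 → K ∈ S := by
  intro H hH K hHK
  exact hS.mem_of_forall_adj hH (hmin _ (Set.sdiff_singleton_ssubset.mpr hH))
    fun _ hHL hLK => interGraph_adj_of_le hHK hHL hLK

theorem stmt1 (G : Type*) [Group G] [Finite G]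
    (S : Set {H : Subgroup G // H ≠ ⊥ ∧ H ≠ ⊤})
    (hS : IsSepSet (interGraph G) S)
    (hmin : ∀ T ⊂ S, ¬ IsSepSet (interGraph G) T)
    (hnc : interGraph G ≠ ⊤) :
    ∀ H ∈ S, ∀ K : {H : Subgroup G // H ≠ ⊥ ∧ H ≠ ⊤}, H.1 ≤ K.1 → K ∈ S :=
  stmt1_general G S hS hmin
end

section
/- Let G be a finite group whose intersection graph has more than k vertices. Then Γ(G) is k-connected if and only if between every pair of distinct minimal subgroups of G there exist at least k internally independent paths in Γ(G). -/
/-!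
Minimal subgroups are pairwise non-adjacent in `Γ(G)`, since two of them meeting nontrivially
coincide. So the forward direction is Menger's theorem for two non-adjacent vertices `u, v`, which
follows from the version for vertex sets applied to their neighbourhoods. That version is proved
for an arbitrary relation on a finite type by Göring's induction on the arcs: if deleting an arc
`x → y` leaves a separator `S₀` with fewer than `k` vertices, then `S₀ ∪ {x}` and `S₀ ∪ {y}` are
separators with exactly `k` vertices; by induction there are `k` disjoint walks towards the first
and `k` from the second, these meet only in `S₀`, and they glue along `S₀` and the arc `x → y`.
Deleting a directed arc rather than an edge is what keeps the arc out of every walk stopped at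
its first vertex in `S₀ ∪ {x}`.

Conversely, let `S` separate `a` from `b` and take minimal subgroups `A₀ ≤ a`, `B₀ ≤ b`; they
differ because `a ∩ b = 1`. A neighbour of `A₀` contains `A₀`, so it equals `a` or is adjacent to
it, and likewise for `B₀` and `b`. Hence each of the `k` independent `A₀`–`B₀` paths has an
internal vertex in `S`, for otherwise `a` and `b` would be joined outside `S`, and independence
makes these vertices distinct.
-/

open List

section Lists

variable {V : Type*}

lemma List.exists_eq_append_cons_of_last_mem {l : List V} {Y : Set V} (h : ∃ y ∈ l, y ∈ Y) :
    ∃ l₁ c l₂, l = l₁ ++ c :: l₂ ∧ c ∈ Y ∧ ∀ z ∈ l₂, z ∉ Y := by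
  classical
  obtain ⟨y, hy, hyY⟩ := h
  obtain ⟨c, r₁, r₂, hr₁, hc, hl, -⟩ := exists_of_eraseP (p := fun z => decide (z ∈ Y))
    (mem_reverse.2 hy) (by simpa using hyY)
  refine ⟨r₂.reverse, c, r₁.reverse, ?_, by simpa using hc,
    fun z hz => by simpa using hr₁ z (mem_reverse.1 hz)⟩
  rw [← reverse_reverse l, hl]
  simp

lemma List.exists_suffix_of_mem_cons {a d : V} {q : List V} (h : a ∈ d :: q) :
    ∃ v, a :: v <:+ d :: q ∧ ∀ b ∈ v, b ∈ q := by
  rcases mem_cons.1 h with rfl | h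
  · exact ⟨q, suffix_refl _, fun _ => id⟩
  · obtain ⟨u, v, rfl⟩ := append_of_mem h
    exact ⟨v, ⟨d :: u, by simp⟩, fun b hb => by simp [hb]⟩

lemma injective_of_pairwise_disjoint_cons {k : ℕ} {d : Fin k → V} {q : Fin k → List V}
    (h : Pairwise fun i j => (d i :: q i).Disjoint (d j :: q j)) : Function.Injective d :=
  fun _ _ hij => by_contra fun hne => h hne mem_cons_self (hij ▸ mem_cons_self)

end Lists

section RelationWalks

variable {V : Type*} {R R' : V → V → Prop} {A B X Y S T : Set V} {l : List V}

-- A walk of the relation `R` is encoded by its list of vertices, an `R`-chain.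
def IsWalkBetween (R : V → V → Prop) (A B : Set V) (l : List V) : Prop :=
  l.IsChain R ∧ (∃ a ∈ l.head?, a ∈ A) ∧ ∃ b ∈ l.getLast?, b ∈ B

def Separates (R : V → V → Prop) (A B S : Set V) : Prop :=
  ∀ l, IsWalkBetween R A B l → ∃ s ∈ l, s ∈ S

def HasDisjointWalks (R : V → V → Prop) (A B : Set V) (k : ℕ) : Prop :=
  ∃ w : Fin k → List V, (∀ i, IsWalkBetween R A B (w i)) ∧
    Pairwise fun i j => (w i).Disjoint (w j)

lemma IsWalkBetween.reverse (h : IsWalkBetween R A B l) :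
    IsWalkBetween (flip R) B A l.reverse :=
  ⟨isChain_reverse.2 h.1, by simpa using h.2.2, by simpa using h.2.1⟩

lemma IsWalkBetween.mono (hR : ∀ p q, R p q → R' p q) (h : IsWalkBetween R A B l) :
    IsWalkBetween R' A B l :=
  ⟨h.1.imp hR, h.2⟩

lemma Separates.reverse (h : Separates R A B S) : Separates (flip R) B A S := fun l hl => by
  simpa using h _ hl.reverse

lemma Separates.anti (hR : ∀ p q, R p q → R' p q) (h : Separates R' A B S) :
    Separates R A B S :=
  fun l hl => h l (hl.mono hR)

lemma Separates.insert {z : V} (hR : ∀ p q, R p q → p ≠ z → q ≠ z → R' p q)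
    (h : Separates R' A B S) : Separates R A B (insert z S) := by
  intro l hl
  by_cases hz : z ∈ l
  · exact ⟨z, hz, S.mem_insert z⟩
  · have hl' : l.IsChain R' := hl.1.imp_of_mem_imp fun p q hp hq hpq =>
      hR p q hpq (ne_of_mem_of_not_mem hp hz) (ne_of_mem_of_not_mem hq hz)
    obtain ⟨s, hs, hsS⟩ := h l ⟨hl', hl.2⟩
    exact ⟨s, hs, Set.mem_insert_of_mem z hsS⟩

lemma HasDisjointWalks.reverse {k : ℕ} (h : HasDisjointWalks R A B k) :
    HasDisjointWalks (flip R) B A k := by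
  obtain ⟨w, hw, hdisj⟩ := h
  exact ⟨fun i => (w i).reverse, fun i => (hw i).reverse, fun i j hij => by simpa using hdisj hij⟩

lemma HasDisjointWalks.mono {k : ℕ} (hR : ∀ p q, R p q → R' p q) (h : HasDisjointWalks R A B k) :
    HasDisjointWalks R' A B k := by
  obtain ⟨w, hw, hdisj⟩ := h
  exact ⟨w, fun i => (hw i).mono hR, hdisj⟩

lemma IsWalkBetween.exists_suffix_from_last_mem (hl : IsWalkBetween R A B l)
    (hY : ∃ y ∈ l, y ∈ Y) :
    ∃ l₁ c l₂, l = l₁ ++ c :: l₂ ∧ (∀ z ∈ l₂, z ∉ Y) ∧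
      IsWalkBetween (fun p q => R p q ∧ q ∉ Y) Y B (c :: l₂) := by
  obtain ⟨l₁, c, l₂, rfl, hc, hl₂⟩ := List.exists_eq_append_cons_of_last_mem hY
  refine ⟨l₁, c, l₂, rfl, hl₂, ?_, ⟨c, rfl, hc⟩, by simpa using hl.2.2⟩
  exact (hl.1.suffix (suffix_append _ _)).imp_of_mem_tail_imp fun p q _ hq hpq =>
    ⟨hpq, hl₂ q hq⟩

lemma Separates.of_separates_suffix (hY : Separates R A B Y)
    (hT : Separates (fun p q => R p q ∧ q ∉ Y) Y B T) : Separates R A B T := by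
  intro l hl
  obtain ⟨l₁, c, l₂, rfl, -, hw⟩ := hl.exists_suffix_from_last_mem (hY l hl)
  obtain ⟨t, ht, htT⟩ := hT _ hw
  exact ⟨t, mem_append_right _ ht, htT⟩

lemma Separates.of_separates_prefix (hX : Separates R A B X)
    (hT : Separates (fun p q => R p q ∧ p ∉ X) A X T) : Separates R A B T :=
  (hX.reverse.of_separates_suffix (R := flip R) hT.reverse).reverse

def IsFan (R : V → V → Prop) (Y B : Set V) {k : ℕ} (d : Fin k → V) (q : Fin k → List V) :
    Prop :=
  (∀ j, IsWalkBetween R Y B (d j :: q j)) ∧ (∀ j, ∀ z ∈ q j, z ∉ Y) ∧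
    (Pairwise fun i j => (d i :: q i).Disjoint (d j :: q j)) ∧ Y ⊆ Set.range d

lemma HasDisjointWalks.exists_isFan {Y : Finset V} {k : ℕ} (h : HasDisjointWalks R Y B k)
    (hk : Y.card ≤ k) : ∃ (d : Fin k → V) (q : Fin k → List V), IsFan R Y B d q := by
  obtain ⟨w, hw, hdisj⟩ := h
  have hsplit j := (hw j).exists_suffix_from_last_mem (Y := (Y : Set V)) <| by
    obtain ⟨a, ha, haY⟩ := (hw j).2.1
    exact ⟨a, mem_of_mem_head? ha, haY⟩
  choose l₁ d q hwq hq hwalk using hsplit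
  have hsub : ∀ j, ∀ z ∈ d j :: q j, z ∈ w j := fun j z hz => hwq j ▸ mem_append_right _ hz
  have hdisj' : Pairwise fun i j => (d i :: q i).Disjoint (d j :: q j) :=
    fun i j hij z hi hj => hdisj hij (hsub i z hi) (hsub j z hj)
  have hdY : ∀ j, d j ∈ Y := fun j => by simpa using (hwalk j).2.1
  refine ⟨d, q, fun j => (hwalk j).mono fun _ _ h => h.1, hq, hdisj', fun y hy => ?_⟩
  obtain ⟨j, -, rfl⟩ := Finset.surj_on_of_inj_on_of_card_le (s := Finset.univ) (fun j _ => d j)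
    (fun j _ => hdY j) (fun i j _ _ h => injective_of_pairwise_disjoint_cons hdisj' h)
    (by simpa using hk) y hy
  exact ⟨j, rfl⟩

-- A common vertex outside `S` would splice the two walks into an `A`–`B` walk avoiding `S`.
lemma Separates.mem_of_mem_of_mem {c d z : V} {p q : List V} (hS : Separates R A B S)
    (hP : IsWalkBetween (flip R) X A (c :: p)) (hp : ∀ a ∈ p, a ∉ S)
    (hQ : IsWalkBetween R Y B (d :: q)) (hq : ∀ a ∈ q, a ∉ S)
    (hzP : z ∈ c :: p) (hzQ : z ∈ d :: q) : z ∈ S := by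
  by_contra hz
  obtain ⟨u, ⟨u', hu⟩, hup⟩ := List.exists_suffix_of_mem_cons hzP
  obtain ⟨v, ⟨v', hv⟩, hvq⟩ := List.exists_suffix_of_mem_cons hzQ
  rw [← hu] at hP
  rw [← hv] at hQ
  have hwalk : IsWalkBetween R A B (u.reverse ++ z :: v) := by
    refine ⟨isChain_split.2 ⟨?_, hQ.1.right_of_append⟩, ?_, ?_⟩
    · rw [← reverse_cons]
      exact isChain_reverse.2 hP.1.right_of_append
    · simpa [getLast?_cons] using hP.2.2
    · simpa using hQ.2.2
  obtain ⟨s, hs, hsS⟩ := hS _ hwalk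
  rcases mem_append.1 hs with hs | hs
  · exact hp s (hup s (mem_reverse.1 hs)) hsS
  · rcases mem_cons.1 hs with rfl | hs
    · exact hz hsS
    · exact hq s (hvq s hs) hsS

lemma exists_injective_comp_eq_update [DecidableEq V] {k : ℕ} {x y : V} {S₀ : Set V}
    (hy : y ∉ S₀) {c d : Fin k → V} (hc : Function.Injective c) (hcX : ∀ i, c i ∈ insert x S₀)
    (hd : insert y S₀ ⊆ Set.range d) :
    ∃ σ : Fin k → Fin k, Function.Injective σ ∧ ∀ i, d (σ i) = Function.update id x y (c i) := by
  have hinj : Set.InjOn (Function.update id x y) (insert x S₀) := by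
    rintro a (rfl | ha) b (rfl | hb) hab <;>
      simp_all [Function.update_apply] <;> grind
  have hmaps : ∀ a ∈ insert x S₀, Function.update id x y a ∈ insert y S₀ := by
    rintro a (rfl | ha)
    · simp
    · by_cases hax : a = x
      · simp [hax]
      · simp [Function.update_of_ne hax, ha]
  choose σ hσ using fun i => hd (hmaps _ (hcX i))
  exact ⟨σ, fun i j hij => hc (hinj (hcX i) (hcX j) (by rw [← hσ i, ← hσ j, hij])), hσ⟩

lemma isWalkBetween_reverse_append [DecidableEq V] {x y c d : V} {p q : List V}
    (hxy : R x y) (hP : IsWalkBetween (flip R) X A (c :: p)) (hQ : IsWalkBetween R Y B (d :: q))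
    (hd : d = Function.update id x y c) :
    IsWalkBetween R A B ((c :: p).reverse ++ if c = x then d :: q else q) := by
  have hr : (c :: if c = x then d :: q else q).IsChain R ∧
      ∃ b ∈ (c :: if c = x then d :: q else q).getLast?, b ∈ B := by
    split_ifs with hc
    · rw [hc, Function.update_self] at hd
      subst hc hd
      exact ⟨isChain_cons_cons.2 ⟨hxy, hQ.1⟩, by simpa [getLast?_cons] using hQ.2.2⟩
    · rw [hd, Function.update_of_ne hc] at hQ
      exact ⟨hQ.1, hQ.2.2⟩
  refine ⟨?_, by simpa [getLast?_cons] using hP.2.2, ?_⟩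
  · rw [reverse_cons]
    refine IsChain.append_overlap ?_ hr.1 (cons_ne_nil _ _)
    rw [← reverse_cons]
    exact isChain_reverse.2 hP.1
  · obtain ⟨b, hb, hbB⟩ := hr.2
    refine ⟨b, ?_, hbB⟩
    rwa [reverse_cons, append_assoc, singleton_append,
      getLast?_append_of_ne_nil _ (cons_ne_nil _ _)]

-- Göring's gluing step for `X = S₀ ∪ {x}` and `Y = S₀ ∪ {y}`. The fan into `X` is stored reversed,
-- as a fan of `flip R` out of `X`; the two fans meet only in `S₀`, and `x` is matched with `y`.
lemma hasDisjointWalks_of_isFan_of_isFan {x y : V} {S₀ : Set V} {k : ℕ}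
    (hxy : R x y) (hy : y ∉ S₀) (hS₀ : Separates (fun p q => R p q ∧ ¬(p = x ∧ q = y)) A B S₀)
    {c d : Fin k → V} {p q : Fin k → List V}
    (hX : IsFan (flip fun p q => R p q ∧ ¬(p = x ∧ q = y)) (insert x S₀) A c p)
    (hY : IsFan (fun p q => R p q ∧ ¬(p = x ∧ q = y)) (insert y S₀) B d q) :
    HasDisjointWalks R A B k := by
  classical
  obtain ⟨hPw, hp, hPdisj, -⟩ := hX
  obtain ⟨hQw, hq, hQdisj, hYd⟩ := hY
  have hcX : ∀ i, c i ∈ insert x S₀ := fun i => by simpa using (hPw i).2.1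
  have hcinj := injective_of_pairwise_disjoint_cons hPdisj
  obtain ⟨σ, hσinj, hσ⟩ := exists_injective_comp_eq_update hy hcinj hcX hYd
  have hkey : ∀ i j, ∀ z ∈ c i :: p i, z ∈ d (σ j) :: q (σ j) → i = j := by
    intro i j z hzP hzQ
    have hzS : z ∈ S₀ := hS₀.mem_of_mem_of_mem (hPw i) (fun a ha haS => hp i a ha (.inr haS))
      (hQw _) (fun a ha haS => hq _ a ha (.inr haS)) hzP hzQ
    have hzc : z = c i := (mem_cons.1 hzP).resolve_right fun h => hp i z h (.inr hzS)
    have hzd : z = d (σ j) := (mem_cons.1 hzQ).resolve_right fun h => hq _ z h (.inr hzS)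
    rw [hσ j] at hzd
    by_cases hcj : c j = x
    · rw [hcj, Function.update_self] at hzd
      exact absurd (hzd ▸ hzS) hy
    · rw [Function.update_of_ne hcj, id] at hzd
      exact hcinj (hzc.symm.trans hzd)
  have hmem : ∀ i, ∀ z ∈ (c i :: p i).reverse ++ (if c i = x then d (σ i) :: q (σ i) else q (σ i)),
      z ∈ c i :: p i ∨ z ∈ d (σ i) :: q (σ i) := by
    intro i z hz
    rcases mem_append.1 hz with hz | hz
    · exact .inl (mem_reverse.1 hz)
    · split_ifs at hz
      exacts [.inr hz, .inr (mem_cons_of_mem _ hz)]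
  refine ⟨fun i => (c i :: p i).reverse ++ if c i = x then d (σ i) :: q (σ i) else q (σ i),
    fun i => isWalkBetween_reverse_append hxy ((hPw i).mono fun _ _ h => h.1)
      ((hQw _).mono fun _ _ h => h.1) (hσ i), fun i j hij z hzi hzj => ?_⟩
  rcases hmem i z hzi with hi | hi <;> rcases hmem j z hzj with hj | hj
  · exact hPdisj hij hi hj
  · exact hij (hkey i j z hi hj)
  · exact hij (hkey j i z hj hi).symm
  · exact hQdisj (hσinj.ne hij) hi hj

lemma hasDisjointWalks_of_forall_not_rel [Finite V] (hR : ∀ p q, ¬R p q) {k : ℕ}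
    (h : ∀ S : Finset V, Separates R A B S → k ≤ S.card) : HasDisjointWalks R A B k := by
  classical
  have : Fintype V := Fintype.ofFinite V
  have hsep : Separates R A B ↑(A ∩ B).toFinset := by
    rintro (_ | ⟨a, _ | ⟨b, l⟩⟩) ⟨hc, ha, hb⟩
    · simp at ha
    · exact ⟨a, mem_singleton_self a, by simp_all⟩
    · exact absurd (isChain_cons_cons.1 hc).1 (hR a b)
  obtain ⟨t, ht, htk⟩ := Finset.exists_subset_card_eq (h _ hsep)
  let e := t.equivFinOfCardEq htk
  refine ⟨fun i => [(e.symm i : V)], fun i => ?_, fun i j hij => ?_⟩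
  · have := ht (e.symm i).2
    simp only [Set.toFinset_inter, Finset.mem_inter, Set.mem_toFinset] at this
    exact ⟨.singleton _, by simpa using this.1, by simpa using this.2⟩
  · simpa [eq_comm] using fun h => hij (e.symm.injective (Subtype.ext h))

theorem hasDisjointWalks_of_forall_separates [Finite V] (R : V → V → Prop) (A B : Set V) (k : ℕ)
    (h : ∀ S : Finset V, Separates R A B S → k ≤ S.card) : HasDisjointWalks R A B k := by
  classical
  induction R using WellFoundedLT.induction generalizing A B k with
  | ind R ih =>
  by_cases harc : ∃ x y, R x y
  swap
  · push Not at harc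
    exact hasDisjointWalks_of_forall_not_rel harc h
  obtain ⟨x, y, hxy⟩ := harc
  set R' : V → V → Prop := fun p q => R p q ∧ ¬(p = x ∧ q = y)
  have hlt : R' < R := lt_of_le_of_ne (fun p q h => h.1) fun he =>
    (congrFun (congrFun he x) y ▸ hxy : R' x y).2 ⟨rfl, rfl⟩
  by_cases hcut : ∀ S : Finset V, Separates R' A B S → k ≤ S.card
  · exact (ih R' hlt A B k hcut).mono fun _ _ h => h.1
  push Not at hcut
  obtain ⟨S₀, hS₀, hS₀k⟩ := hcut
  have hX : Separates R A B ↑(insert x S₀) := by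
    simpa using hS₀.insert fun p q hpq hp _ => ⟨hpq, fun h => hp h.1⟩
  have hY : Separates R A B ↑(insert y S₀) := by
    simpa using hS₀.insert fun p q hpq _ hq => ⟨hpq, fun h => hq h.2⟩
  have hy : y ∉ S₀ := fun hy => by
    have := h _ hY
    rw [Finset.insert_eq_of_mem hy] at this
    omega
  have hXk : (insert x S₀).card ≤ k := (Finset.card_insert_le _ _).trans hS₀k
  have hYk : (insert y S₀).card ≤ k := (Finset.card_insert_le _ _).trans hS₀k
  obtain ⟨c, p, hcp⟩ := (ih R' hlt A _ k fun T hT => h T <| hX.of_separates_prefix <|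
    hT.anti fun p q h => ⟨h.1, fun e => h.2 (e.1 ▸ by simp)⟩).reverse.exists_isFan hXk
  obtain ⟨d, q, hdq⟩ := (ih R' hlt _ B k fun T hT => h T <| hY.of_separates_suffix <|
    hT.anti fun p q h => ⟨h.1, fun e => h.2 (e.2 ▸ by simp)⟩).exists_isFan hYk
  rw [Finset.coe_insert] at hcp hdq
  exact hasDisjointWalks_of_isFan_of_isFan hxy hy hS₀ hcp hdq

end RelationWalks

section LocalMenger

open SimpleGraph

variable {V : Type*} {Γ : SimpleGraph V} {u v : V}

lemma SimpleGraph.Walk.exists_support_eq_cons_append (p : Γ.Walk u v) (huv : u ≠ v) :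
    ∃ m, p.support = u :: (m ++ [v]) := by
  cases p with
  | nil => exact absurd rfl huv
  | cons _ q => exact ⟨q.support.dropLast, by rw [support_cons, dropLast_support_concat]⟩

lemma SimpleGraph.Walk.exists_isWalkBetween_neighborSet [DecidableEq V] (w : Γ.Walk u v)
    (huv : u ≠ v) (hadj : ¬Γ.Adj u v) :
    ∃ m, IsWalkBetween Γ.Adj (Γ.neighborSet u) (Γ.neighborSet v) m ∧
      ∀ x ∈ m, x ∈ w.support ∧ x ≠ u ∧ x ≠ v := by
  let p := w.toPath
  obtain ⟨m, hm⟩ := (p : Γ.Walk u v).exists_support_eq_cons_append huv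
  have hchain : (u :: (m ++ [v])).IsChain Γ.Adj := hm ▸ (p : Γ.Walk u v).isChain_adj_support
  have hnodup : (u :: (m ++ [v])).Nodup := hm ▸ p.2.support_nodup
  obtain ⟨a, m', rfl⟩ : ∃ a m', m = a :: m' := by
    cases m with
    | nil => exact absurd (isChain_pair.1 hchain) hadj
    | cons a m' => exact ⟨a, m', rfl⟩
  refine ⟨a :: m', ⟨hchain.tail.left_of_append, ⟨a, rfl, (isChain_cons_cons.1 hchain).1⟩, ?_⟩,
    fun x hx => ⟨?_, ?_, ?_⟩⟩
  · have hlast := (isChain_append.1 hchain.tail).2.2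
    simp only [getLast?_cons, Option.mem_def, head?_cons, Option.some.injEq, forall_eq'] at hlast
    exact ⟨_, by simp [getLast?_cons], hlast.symm⟩
  · have hxp : x ∈ (p : Γ.Walk u v).support := by
      rw [hm]
      exact mem_cons_of_mem _ (mem_append_left _ hx)
    exact w.support_toPath_subset_support hxp
  · exact fun hxu => (nodup_cons.1 hnodup).1 (hxu ▸ mem_append_left _ hx)
  · exact fun hxv => (nodup_append.1 (nodup_cons.1 hnodup).2).2.2 x hx v (mem_singleton_self v) hxv

lemma HasDisjointWalks.hasIndepPaths [DecidableEq V] {k : ℕ}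
    (h : HasDisjointWalks Γ.Adj (Γ.neighborSet u) (Γ.neighborSet v) k) :
    HasIndepPaths Γ u v k := by
  obtain ⟨w, hw, hdisj⟩ := h
  have hchain : ∀ i, (u :: (w i ++ [v])).IsChain Γ.Adj := fun i => by
    obtain ⟨hc, ⟨a, ha, hua⟩, ⟨b, hb, hbv⟩⟩ := hw i
    refine (hc.append (isChain_singleton v) ?_).cons ?_
    · simpa [Option.mem_def.1 hb] using hbv.symm
    · simpa [head?_append, Option.mem_def.1 ha] using hua
  let W i : Γ.Walk u v := (Walk.ofSupport _ (cons_ne_nil _ _) (hchain i)).copy head_cons (by simp)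
  have hW : ∀ i, ∀ x ∈ ((W i).toPath : Γ.Walk u v).support, x = u ∨ x ∈ w i ∨ x = v := by
    intro i x hx
    have := (W i).support_toPath_subset_support hx
    rw [Walk.support_copy, Walk.support_ofSupport] at this
    simpa using this
  refine ⟨fun i => (W i).toPath, fun i => (W i).toPath.2, fun i j hij x hxi hxj => ?_⟩
  rcases hW i x hxi with h | h | h
  · exact .inl h
  · rcases hW j x hxj with h' | h' | h'
    · exact .inl h'
    · exact absurd h' (hdisj hij h)
    · exact .inr h'
  · exact .inr h

theorem hasIndepPaths_of_forall_le_card [Finite V] (huv : u ≠ v) (hadj : ¬Γ.Adj u v) {k : ℕ}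
    (h : ∀ S : Finset V, u ∉ S → v ∉ S → (∀ w : Γ.Walk u v, ∃ s ∈ w.support, s ∈ S) →
      k ≤ S.card) : HasIndepPaths Γ u v k := by
  classical
  refine (hasDisjointWalks_of_forall_separates _ _ _ k fun S hS => ?_).hasIndepPaths
  have hS' : ∀ w : Γ.Walk u v, ∃ s ∈ w.support, s ∈ S \ {u, v} := fun w => by
    obtain ⟨m, hm, hmw⟩ := w.exists_isWalkBetween_neighborSet huv hadj
    obtain ⟨s, hs, hsS⟩ := hS m hm
    exact ⟨s, (hmw s hs).1, by simp [Finset.mem_coe.1 hsS, (hmw s hs).2]⟩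
  exact (h _ (by simp) (by simp) hS').trans (Finset.card_le_card Finset.sdiff_subset)

lemma HasIndepPaths.le_card [Finite V] {S : Set V} {k : ℕ} (h : HasIndepPaths Γ u v k)
    (hS : ∀ p : Γ.Walk u v, p.IsPath → ∃ s ∈ p.support, s ∈ S ∧ s ≠ u ∧ s ≠ v) :
    k ≤ Nat.card S := by
  obtain ⟨p, hp, hindep⟩ := h
  choose s hsp hsS hsu hsv using fun i => hS (p i) (hp i)
  have hinj : Function.Injective s := fun i j hij => by
    by_contra hne
    rcases hindep i j hne (s i) (hsp i) (hij ▸ hsp j) with h | h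
    exacts [hsu i h, hsv i h]
  simpa using Nat.card_le_card_of_injective (fun i => (⟨s i, hsS i⟩ : S))
    fun i j h => hinj (congrArg Subtype.val h)

lemma SimpleGraph.reachable_induce_of_isChain {s : Set V} {l : List V} (hl : l.IsChain Γ.Adj)
    (hs : ∀ x ∈ l, x ∈ s) {a b : V} (ha : a ∈ l.head?) (hb : b ∈ l.getLast?) :
    (Γ.induce s).Reachable ⟨a, hs a (mem_of_mem_head? ha)⟩ ⟨b, hs b (mem_of_mem_getLast? hb)⟩ := by
  have hne : l ≠ [] := ne_nil_of_mem (mem_of_mem_head? ha)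
  obtain rfl : l.head hne = a := by simpa [head?_eq_some_head hne] using ha
  obtain rfl : l.getLast hne = b := by simpa [getLast?_eq_some_getLast hne] using hb
  exact ((Walk.ofSupport l hne hl).induce s (by rwa [Walk.support_ofSupport])).reachable

lemma isSepSet_of_forall_walk {S : Set V} (hu : u ∉ S) (hv : v ∉ S)
    (h : ∀ w : Γ.Walk u v, ∃ s ∈ w.support, s ∈ S) : IsSepSet Γ S := by
  refine ⟨⟨u, hu⟩, ⟨v, hv⟩, fun ⟨w⟩ => ?_⟩
  obtain ⟨s, hs, hsS⟩ := h (w.map (Embedding.induce Sᶜ).toHom)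
  erw [Walk.support_map] at hs
  obtain ⟨t, -, rfl⟩ := List.mem_map.1 hs
  exact t.2 hsS

lemma KConnected.hasIndepPaths [Finite V] {k : ℕ} (h : KConnected Γ k) (huv : u ≠ v)
    (hadj : ¬Γ.Adj u v) : HasIndepPaths Γ u v k :=
  hasIndepPaths_of_forall_le_card huv hadj fun S hu hv hS => by
    simpa using h.2 S (isSepSet_of_forall_walk hu hv hS)

lemma SimpleGraph.Walk.exists_internal_mem_of_not_reachable [DecidableEq V] {S : Set V}
    {a b : ↥Sᶜ} (hab : ¬(Γ.induce Sᶜ).Reachable a b)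
    (hu : Γ.neighborSet u ⊆ insert ↑a (Γ.neighborSet a))
    (hv : Γ.neighborSet v ⊆ insert ↑b (Γ.neighborSet b))
    (huv : u ≠ v) (hadj : ¬Γ.Adj u v) (p : Γ.Walk u v) :
    ∃ s ∈ p.support, s ∈ S ∧ s ≠ u ∧ s ≠ v := by
  by_contra! hno
  obtain ⟨m, ⟨hm, ⟨c, hc, huc⟩, ⟨d, hd, hvd⟩⟩, hmp⟩ := p.exists_isWalkBetween_neighborSet huv hadj
  have hmS : ∀ x ∈ m, x ∈ Sᶜ := fun x hx hxS =>
    (hmp x hx).2.2 (hno x (hmp x hx).1 hxS (hmp x hx).2.1)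
  have hreach : ∀ (a' : ↥Sᶜ) (c : V) (hc : c ∈ Sᶜ), c ∈ insert ↑a' (Γ.neighborSet a') →
      (Γ.induce Sᶜ).Reachable a' ⟨c, hc⟩ := by
    rintro a' c hc (rfl | h)
    · rfl
    · exact Adj.reachable (by simpa using h)
  exact hab ((hreach a c _ (hu huc)).trans
    ((reachable_induce_of_isChain hm hmS hc hd).trans (hreach b d _ (hv hvd)).symm))

lemma kConnected_of_hasIndepPaths_of_neighborSet_subset [Finite V] {k : ℕ}
    (hcard : k < Nat.card V)
    (h : ∀ a b, a ≠ b → ¬Γ.Adj a b → ∃ u v, u ≠ v ∧ ¬Γ.Adj u v ∧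
      Γ.neighborSet u ⊆ insert a (Γ.neighborSet a) ∧
      Γ.neighborSet v ⊆ insert b (Γ.neighborSet b) ∧ HasIndepPaths Γ u v k) :
    KConnected Γ k := by
  classical
  refine ⟨hcard, fun S ⟨a, b, hab⟩ => ?_⟩
  have hne : (a : V) ≠ b := fun h => hab (Subtype.ext h ▸ .rfl)
  have hnadj : ¬Γ.Adj a b := fun h => hab (Adj.reachable (by simpa using h))
  obtain ⟨u, v, huv, hadj, hu, hv, hpaths⟩ := h a b hne hnadj
  exact hpaths.le_card fun p _ => p.exists_internal_mem_of_not_reachable hab hu hv huv hadj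

end LocalMenger

section IntersectionGraph

variable {G : Type*} [Group G] {A B H : Subgroup G}

lemma IsMinimalSubgroup.le_of_inf_ne_bot (hA : IsMinimalSubgroup A) (h : A ⊓ H ≠ ⊥) : A ≤ H :=
  (hA.2 _ h inf_le_left).ge.trans inf_le_right

lemma IsMinimalSubgroup.eq_of_inf_ne_bot (hA : IsMinimalSubgroup A) (hB : IsMinimalSubgroup B)
    (h : A ⊓ B ≠ ⊥) : A = B :=
  le_antisymm (hA.le_of_inf_ne_bot h) (hB.le_of_inf_ne_bot ((inf_comm B A).trans_ne h))

lemma exists_isMinimalSubgroup_le [Finite G] (a : {H : Subgroup G // H ≠ ⊥ ∧ H ≠ ⊤}) :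
    ∃ u : {H : Subgroup G // H ≠ ⊥ ∧ H ≠ ⊤}, IsMinimalSubgroup u.1 ∧ u.1 ≤ a.1 := by
  obtain ⟨M, hMa, hM⟩ := exists_minimal_le_of_wellFoundedLT (· ≠ ⊥) a.1 a.2.1
  exact ⟨⟨M, hM.1, ne_top_of_le_ne_top a.2.2 hMa⟩,
    ⟨hM.1, fun K hK hKM => le_antisymm hKM (hM.2 hK hKM)⟩, hMa⟩

lemma interGraph_not_adj {u v : {H : Subgroup G // H ≠ ⊥ ∧ H ≠ ⊤}}
    (hu : IsMinimalSubgroup u.1) (hv : IsMinimalSubgroup v.1) : ¬(interGraph G).Adj u v :=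
  fun h => h.1 (Subtype.ext (hu.eq_of_inf_ne_bot hv h.2))

lemma interGraph_neighborSet_subset {u a : {H : Subgroup G // H ≠ ⊥ ∧ H ≠ ⊤}}
    (hu : IsMinimalSubgroup u.1) (hua : u.1 ≤ a.1) :
    (interGraph G).neighborSet u ⊆ insert a ((interGraph G).neighborSet a) := by
  intro c hc
  by_cases hca : c = a
  · exact .inl hca
  · exact .inr ⟨Ne.symm hca, fun h =>
      hu.1 (le_bot_iff.1 ((le_inf hua (hu.le_of_inf_ne_bot hc.2)).trans_eq h))⟩

end IntersectionGraph

theorem stmt2 (G : Type*) [Group G] [Finite G] (k : ℕ)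
    (hcard : k < Nat.card {H : Subgroup G // H ≠ ⊥ ∧ H ≠ ⊤}) :
    KConnected (interGraph G) k ↔
      ∀ A B : {H : Subgroup G // H ≠ ⊥ ∧ H ≠ ⊤}, A ≠ B →
        IsMinimalSubgroup A.1 → IsMinimalSubgroup B.1 →
        HasIndepPaths (interGraph G) A B k := by
  refine ⟨fun h A B hAB hA hB => h.hasIndepPaths hAB (interGraph_not_adj hA hB),
    fun h => kConnected_of_hasIndepPaths_of_neighborSet_subset hcard fun a b hab hadj => ?_⟩
  obtain ⟨u, hu, hua⟩ := exists_isMinimalSubgroup_le a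
  obtain ⟨v, hv, hvb⟩ := exists_isMinimalSubgroup_le b
  have hab' : a.1 ⊓ b.1 = ⊥ := by
    by_contra h'
    exact hadj ⟨hab, h'⟩
  have huv : u ≠ v := fun h =>
    hu.1 (le_bot_iff.1 ((le_inf hua ((congrArg Subtype.val h).le.trans hvb)).trans_eq hab'))
  exact ⟨u, v, huv, interGraph_not_adj hu hv, interGraph_neighborSet_subset hu hua,
    interGraph_neighborSet_subset hv hvb, h u v huv hu hv⟩
end

section
/- Let G be a finite non-simple group whose intersection graph Γ(G) is disconnected, and let A be a proper non-trivial subgroup lying in a different connected component of Γ(G) than a minimal normal subgroup N of G. Then G = N ⋊ A with N ∩ A = 1, |A| is prime, and A is a maximal subgroup of G. -/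
/-! The subgroup `N ⊔ B` generated by `N` and a non-trivial `B ≤ A` meets both `N` and `A`,
so it is a common neighbour unless it is all of `G`; likewise every proper subgroup above `A`
must miss `N`. Hence `A` and each of its non-trivial subgroups are complements of the normal
subgroup `N`, and two nested complements of a normal subgroup coincide: `A` is minimal (so of
prime order) and maximal. -/

namespace interGraph

variable {G : Type*} [Group G]

theorem reachable_of_inf_ne_bot {U V : {H : Subgroup G // H ≠ ⊥ ∧ H ≠ ⊤}}
    (h : U.1 ⊓ V.1 ≠ ⊥) : (interGraph G).Reachable U V := by
  by_cases hUV : U = V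
  · exact hUV ▸ .refl U
  · exact SimpleGraph.Adj.reachable ⟨hUV, h⟩

theorem reachable_of_inf_ne_bot_of_inf_ne_bot {U V : {H : Subgroup G // H ≠ ⊥ ∧ H ≠ ⊤}}
    {H : Subgroup G} (hH : H ≠ ⊤) (hU : U.1 ⊓ H ≠ ⊥) (hV : H ⊓ V.1 ≠ ⊥) :
    (interGraph G).Reachable U V :=
  let W : {H : Subgroup G // H ≠ ⊥ ∧ H ≠ ⊤} :=
    ⟨H, fun h => hU (by rw [h, inf_bot_eq]), hH⟩
  (reachable_of_inf_ne_bot (V := W) hU).trans (reachable_of_inf_ne_bot (U := W) hV)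

end interGraph

namespace Subgroup

open scoped Pointwise in
theorem eq_of_le_of_sup_eq_top_of_inf_eq_bot {G : Type*} [Group G] {N B C : Subgroup G}
    [N.Normal] (hBC : B ≤ C) (hB : N ⊔ B = ⊤) (hC : N ⊓ C = ⊥) : B = C := by
  refine le_antisymm hBC fun c hc => ?_
  have hc' : c ∈ (N : Set G) * (B : Set G) := by
    rw [← normal_mul, hB]
    exact mem_top c
  obtain ⟨n, hn, b, hb, rfl⟩ := hc'
  have hn1 : n = 1 := by
    rw [← mem_bot, ← hC]
    exact ⟨hn, by simpa using C.mul_mem hc (C.inv_mem (hBC hb))⟩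
  simpa [hn1] using hb

end Subgroup

theorem IsMinimalSubgroup.prime_card {G : Type*} [Group G] {A : Subgroup G} [Finite A]
    (hA : IsMinimalSubgroup A) : (Nat.card A).Prime := by
  obtain ⟨p, hp, hpA⟩ := Nat.exists_prime_and_dvd (mt (Subgroup.eq_bot_of_card_eq A) hA.1)
  have : Fact p.Prime := ⟨hp⟩
  obtain ⟨g, hg⟩ := exists_prime_orderOf_dvd_card' p hpA
  have hg1 : (g : G) ≠ 1 := fun h1 =>
    hp.ne_one (by rw [← hg, ← orderOf_submonoid, h1, orderOf_one])
  have hgA : Subgroup.zpowers (g : G) = A :=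
    hA.2 _ (Subgroup.zpowers_ne_bot.2 hg1) (Subgroup.zpowers_le.2 g.2)
  rwa [← hgA, Nat.card_zpowers, orderOf_submonoid g, hg]

theorem stmt5_general (G : Type*) [Group G] [Finite G]
    (N A : {H : Subgroup G // H ≠ ⊥ ∧ H ≠ ⊤})
    (hN : N.1.Normal)
    (hdis : ¬ (interGraph G).Reachable N A) :
    N.1 ⊔ A.1 = ⊤ ∧ N.1 ⊓ A.1 = ⊥ ∧ (Nat.card A.1).Prime ∧ IsCoatom A.1 := by
  have hinf : N.1 ⊓ A.1 = ⊥ := not_not.1 (mt interGraph.reachable_of_inf_ne_bot hdis)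
  have hsup : ∀ B ≤ A.1, B ≠ ⊥ → N.1 ⊔ B = ⊤ := fun B hBA hB => by
    by_contra hB_top
    refine hdis (interGraph.reachable_of_inf_ne_bot_of_inf_ne_bot hB_top ?_ ?_)
    · rw [inf_eq_left.2 le_sup_left]
      exact N.2.1
    · exact ne_bot_of_le_ne_bot hB (le_inf le_sup_right hBA)
  have hA_min : IsMinimalSubgroup A.1 :=
    ⟨A.2.1, fun B hB hBA =>
      Subgroup.eq_of_le_of_sup_eq_top_of_inf_eq_bot hBA (hsup B hBA hB) hinf⟩
  refine ⟨hsup A.1 le_rfl A.2.1, hinf, hA_min.prime_card, A.2.2, fun M hAM => ?_⟩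
  by_contra hM_top
  have hNM : N.1 ⊓ M = ⊥ := by
    by_contra hNM
    refine hdis (interGraph.reachable_of_inf_ne_bot_of_inf_ne_bot hM_top hNM ?_)
    rw [inf_eq_right.2 hAM.le]
    exact A.2.1
  exact hAM.ne (Subgroup.eq_of_le_of_sup_eq_top_of_inf_eq_bot hAM.le (hsup A.1 le_rfl A.2.1) hNM)

theorem stmt5 (G : Type*) [Group G] [Finite G] (hns : ¬ IsSimpleGroup G)
    (N A : {H : Subgroup G // H ≠ ⊥ ∧ H ≠ ⊤})
    (hN : N.1.Normal)
    (hmin : ∀ K : Subgroup G, K.Normal → K ≠ ⊥ → K ≤ N.1 → K = N.1)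
    (hdis : ¬ (interGraph G).Reachable N A) :
    N.1 ⊔ A.1 = ⊤ ∧ N.1 ⊓ A.1 = ⊥ ∧ (Nat.card A.1).Prime ∧ IsCoatom A.1 :=
  stmt5_general G N A hN hdis
end

section
/- Let G be a finite group of the form G = N ⋊ A where N is a minimal normal subgroup which is an elementary abelian p-group, A ≅ ℤ_q with q a prime distinct from p, and N_G(A) = A. Then every proper non-trivial subgroup of G is either contained in N or is a Sylow q-subgroup of G; consequently the intersection graph Γ(G) is disconnected. -/
/-!
A subgroup `H` not contained in `N` satisfies `H ⊔ N = ⊤`, because `N` has prime index `q`.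
Since `N` is abelian, `H ⊓ N` is then normalized by both `H` and `N`, hence normal in `G`, so by
minimality it is trivial (otherwise `N ≤ H` and `H = ⊤`). Thus `H` is a complement of `N` and has
order `q`; as `N` is a `p`-group, every `q`-subgroup containing `H` is again a complement of `N`,
of the same order, so `H` is a Sylow `q`-subgroup. A subgroup meeting `A` non-trivially contains
`A`, which has prime order, so it is not contained in `N`; it is then a complement of `N` containing
the complement `A`, hence equal to `A`. Thus `A` is an isolated vertex of the intersection graph.
-/

namespace Subgroup

variable {G : Type*} [Group G] {H K N : Subgroup G}

theorem le_or_sup_eq_top_of_index_prime (hN : N.index.Prime) (H : Subgroup G) :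
    H ≤ N ∨ H ⊔ N = ⊤ := by
  rw [← relIndex_mul_index (le_sup_right : N ≤ H ⊔ N)] at hN
  rcases Nat.prime_mul_iff.mp hN with ⟨-, h⟩ | ⟨-, h⟩
  · exact Or.inr (index_eq_one.mp h)
  · exact Or.inl (le_sup_left.trans (relIndex_eq_one.mp h))

theorem le_of_inf_ne_bot_of_card_prime (hH : (Nat.card H).Prime) (h : H ⊓ K ≠ ⊥) : H ≤ K := by
  have := Fact.mk hH
  rcases (K.subgroupOf H).eq_bot_or_eq_top_of_prime_card with h' | h'
  · exact absurd (disjoint_iff.mp (subgroupOf_eq_bot.mp h').symm) h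
  · exact subgroupOf_eq_top.mp h'

theorem normal_inf_of_sup_eq_top [hN : N.Normal] [IsMulCommutative N] (hsup : H ⊔ N = ⊤) :
    (H ⊓ N).Normal where
  conj_mem x hx g := by
    obtain ⟨h, hh, n, hn, rfl⟩ := mem_sup_of_normal_right.mp (hsup ▸ mem_top g)
    have hnx : n * x * n⁻¹ = x := by
      rw [setLike_mul_comm hn hx.2, mul_inv_cancel_right]
    rw [show h * n * x * (h * n)⁻¹ = h * (n * x * n⁻¹) * h⁻¹ by group, hnx]
    exact ⟨H.mul_mem (H.mul_mem hh hx.1) (H.inv_mem hh), hN.conj_mem x hx.2 h⟩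

theorem card_eq_index_of_isCompl [N.Normal] (h : IsCompl H N) : Nat.card H = N.index := by
  rw [← relIndex_top_right, ← h.sup_eq_top, relIndex_sup_right, ← inf_relIndex_right,
    h.symm.inf_eq_bot, relIndex_bot_left]

theorem eq_of_le_of_isCompl [Finite G] [N.Normal] (hH : IsCompl H N) (hK : IsCompl K N)
    (hle : H ≤ K) : H = K :=
  eq_of_le_of_card_ge hle (by rw [card_eq_index_of_isCompl hH, card_eq_index_of_isCompl hK])

theorem isCompl_of_not_le [N.Normal] [IsMulCommutative N]
    (hmin : ∀ K : Subgroup G, K.Normal → K ≠ ⊥ → K ≤ N → K = N) (hN : N.index.Prime)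
    (hH : H ≠ ⊤) (hHN : ¬ H ≤ N) : IsCompl H N := by
  have hsup : H ⊔ N = ⊤ := (le_or_sup_eq_top_of_index_prime hN H).resolve_left hHN
  refine IsCompl.of_eq ?_ hsup
  by_contra hbot
  have hNH : N ≤ H := hmin _ (normal_inf_of_sup_eq_top hsup) hbot inf_le_right ▸ inf_le_left
  exact hH (by rwa [sup_eq_left.mpr hNH] at hsup)

end Subgroup

open Subgroup in
theorem IsPGroup.exists_sylow_eq_of_isCompl {G : Type*} [Group G] [Finite G] {p q : ℕ}
    [Fact p.Prime] [Fact q.Prime] (hpq : p ≠ q) {H N : Subgroup G} [N.Normal]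
    (hN : IsPGroup p N) (hH : IsPGroup q H) (hHN : IsCompl H N) : ∃ Q : Sylow q G, H = Q := by
  refine ⟨⟨H, hH, fun {Q} hQ hHQ => ?_⟩, rfl⟩
  have hQN : IsCompl Q N := by
    refine ⟨(disjoint_of_ne q p hpq.symm Q N hQ hN), codisjoint_iff.mpr ?_⟩
    exact top_le_iff.mp (hHN.sup_eq_top ▸ sup_le_sup_right hHQ N)
  exact (eq_of_le_of_isCompl hHN hQN hHQ).symm

theorem SimpleGraph.not_connected_of_forall_not_adj {V : Type*} {Γ : SimpleGraph V} {u v : V}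
    (huv : u ≠ v) (hu : ∀ w, ¬ Γ.Adj u w) : ¬ Γ.Connected := fun hconn => by
  obtain ⟨w⟩ := hconn.preconnected u v
  cases w with
  | nil => exact huv rfl
  | cons h _ => exact hu _ h

open Subgroup in
theorem interGraph_not_adj_of_isCompl {G : Type*} [Group G] [Finite G] {N : Subgroup G}
    [N.Normal] [IsMulCommutative N] (hmin : ∀ K : Subgroup G, K.Normal → K ≠ ⊥ → K ≤ N → K = N)
    (hN : N.index.Prime) {A : {H : Subgroup G // H ≠ ⊥ ∧ H ≠ ⊤}} (hA : IsCompl A.1 N) (C) :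
    ¬ (interGraph G).Adj A C := by
  rintro ⟨hAC, hinter⟩
  have hle : A.1 ≤ C.1 := le_of_inf_ne_bot_of_card_prime (card_eq_index_of_isCompl hA ▸ hN) hinter
  have hCN : ¬ C.1 ≤ N := fun h => A.2.1 (hA.disjoint.eq_bot_of_le (hle.trans h))
  exact hAC (Subtype.ext (eq_of_le_of_isCompl hA (isCompl_of_not_le hmin hN C.2.2 hCN) hle))

theorem stmt6_general (G : Type*) [Group G] [Finite G] (p q : ℕ) (hp : p.Prime) (hq : q.Prime)
    (hpq : p ≠ q) (N A : Subgroup G) (hN : N.Normal)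
    (hminN : ∀ K : Subgroup G, K.Normal → K ≠ ⊥ → K ≤ N → K = N)
    (helem1 : ∀ x : N, x ^ p = 1) (helem2 : ∀ x y : N, x * y = y * x)
    (hA : Nat.card A = q)
    (hinf : N ⊓ A = ⊥) (hsup : N ⊔ A = ⊤) :
    (∀ H : Subgroup G, H ≠ ⊥ → H ≠ ⊤ → H ≤ N ∨ ∃ Q : Sylow q G, H = ↑Q) ∧
      ¬ (interGraph G).Connected := by
  have := Fact.mk hp
  have := Fact.mk hq
  have : IsMulCommutative N := isMulCommutative_iff.mpr helem2
  have hAN : IsCompl A N := IsCompl.of_eq (by rw [inf_comm, hinf]) (by rw [sup_comm, hsup])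
  have hindex : N.index = q := hA ▸ (Subgroup.card_eq_index_of_isCompl hAN).symm
  have hidx : N.index.Prime := hindex ▸ hq
  have hNp : IsPGroup p N := fun x => ⟨1, by rw [pow_one, helem1]⟩
  refine ⟨fun H _ hH => or_iff_not_imp_left.mpr fun hHN => ?_, fun hconn => ?_⟩
  · have hHN := Subgroup.isCompl_of_not_le hminN hidx hH hHN
    have hcard : Nat.card H = q ^ 1 := by
      rw [Subgroup.card_eq_index_of_isCompl hHN, hindex, pow_one]
    exact hNp.exists_sylow_eq_of_isCompl hpq (.of_card hcard) hHN
  have hAbot : A ≠ ⊥ := fun h => hq.one_lt.ne' (by rw [← hA, h, Subgroup.card_bot])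
  have hNbot : N ≠ ⊥ := by
    -- otherwise `G` has prime order and the graph has no vertex at all
    rintro rfl
    obtain ⟨⟨B, hB, hBtop⟩⟩ := hconn.nonempty
    rcases Subgroup.le_or_sup_eq_top_of_index_prime hidx B with h | h
    · exact hB (le_bot_iff.mp h)
    · exact hBtop (by rwa [sup_bot_eq] at h)
  have hAtop : A ≠ ⊤ := fun h => hNbot (by rwa [h, inf_top_eq] at hinf)
  have hNtop : N ≠ ⊤ := fun h => hAbot (by rwa [h, top_inf_eq] at hinf)
  have hAN_ne : A ≠ N := fun h => hAbot (hAN.disjoint.eq_bot_of_le h.le)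
  exact SimpleGraph.not_connected_of_forall_not_adj (Γ := interGraph G)
    (u := ⟨A, hAbot, hAtop⟩) (v := ⟨N, hNbot, hNtop⟩) (fun h => hAN_ne (congrArg (·.1) h))
    (interGraph_not_adj_of_isCompl hminN hidx hAN) hconn

theorem stmt6 (G : Type*) [Group G] [Finite G] (p q : ℕ) (hp : p.Prime) (hq : q.Prime)
    (hpq : p ≠ q) (N A : Subgroup G) (hN : N.Normal)
    (hminN : ∀ K : Subgroup G, K.Normal → K ≠ ⊥ → K ≤ N → K = N)
    (helem1 : ∀ x : N, x ^ p = 1) (helem2 : ∀ x y : N, x * y = y * x)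
    (hA : Nat.card A = q) (hnorm : Subgroup.normalizer (A : Set G) = A)
    (hinf : N ⊓ A = ⊥) (hsup : N ⊔ A = ⊤) :
    (∀ H : Subgroup G, H ≠ ⊥ → H ≠ ⊤ → H ≤ N ∨ ∃ Q : Sylow q G, H = ↑Q) ∧
      ¬ (interGraph G).Connected :=
  stmt6_general G p q hp hq hpq N A hN hminN helem1 helem2 hA hinf hsup
end

section
/- Let G be a finite supersolvable group of order p₁^{α₁}⋯p_k^{α_k} with order length ℓ = α₁+⋯+α_k. Then the connectivity of Γ(G) is at least ℓ − 3 (with the conventions κ = −2, −1, 0 for groups of order 1, p, p² respectively). In particular every p-group of order greater than p^α is (α−2)-connected. -/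
open Subgroup ArithmeticFunction
open scoped ArithmeticFunction.Omega

lemma ArithmeticFunction.cardFactors_le_of_dvd {m n : ℕ} (h : m ∣ n) (hn : n ≠ 0) :
    Ω m ≤ Ω n := by
  simpa only [cardFactors_apply] using (Nat.primeFactorsList_sublist_of_dvd h hn).length_le

namespace Subgroup

variable {G : Type*} [Group G]

lemma card_mul_relIndex {H K : Subgroup G} (h : H ≤ K) :
    Nat.card H * H.relIndex K = Nat.card K := by
  simpa only [relIndex_bot_left] using relIndex_mul_relIndex ⊥ H K bot_le h

variable [Finite G]

lemma cardFactors_card_add_cardFactors_index (H : Subgroup G) :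
    Ω (Nat.card H) + Ω H.index = Ω (Nat.card G) := by
  rw [← card_mul_index H, cardFactors_mul Nat.card_pos.ne' index_ne_zero_of_finite]

lemma relIndex_sup_eq_inf_relIndex (M N : Subgroup G) [N.Normal] :
    M.relIndex (M ⊔ N) = (M ⊓ N).relIndex N := by
  have hM := relIndex_mul_relIndex (M ⊓ N) M (M ⊔ N) inf_le_left le_sup_left
  have hN := relIndex_mul_relIndex (M ⊓ N) N (M ⊔ N) inf_le_right le_sup_right
  rw [relIndex_sup_right, ← inf_relIndex_right N M, inf_comm N M, ← hM, mul_comm] at hN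
  exact Nat.eq_of_mul_eq_mul_left (Nat.pos_of_ne_zero index_ne_zero_of_finite) hN.symm

lemma cardFactors_card_sup_le (A N : Subgroup G) [N.Normal] :
    Ω (Nat.card ↥(A ⊔ N)) ≤ Ω (Nat.card A) + Ω (Nat.card N) := by
  have hdvd : Nat.card ↥(A ⊔ N) ∣ Nat.card N * Nat.card A := by
    rw [← card_mul_relIndex (le_sup_right : N ≤ A ⊔ N), relIndex_sup_right]
    exact mul_dvd_mul_left _ (relIndex_dvd_card N A)
  calc Ω (Nat.card ↥(A ⊔ N)) ≤ Ω (Nat.card N * Nat.card A) :=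
        cardFactors_le_of_dvd hdvd (mul_ne_zero Nat.card_pos.ne' Nat.card_pos.ne')
    _ = Ω (Nat.card A) + Ω (Nat.card N) := by
        rw [cardFactors_mul Nat.card_pos.ne' Nat.card_pos.ne', add_comm]

lemma exists_le_card_prime {K : Subgroup G} (hK : K ≠ ⊥) :
    ∃ A ≤ K, (Nat.card A).Prime := by
  obtain ⟨p, hp, hpK⟩ := Nat.exists_prime_and_dvd (mt card_eq_one.mp hK)
  have : Fact p.Prime := ⟨hp⟩
  obtain ⟨A, hA⟩ := Sylow.exists_subgroup_card_pow_prime p (n := 1) (by simpa using hpK)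
  refine ⟨A.map K.subtype, map_subtype_le A, ?_⟩
  rwa [card_map_of_injective K.subtype_injective, hA, pow_one]

end Subgroup

namespace IsSupersolvable

variable {G : Type*} [Group G]

theorem exists_normal_card_prime (hG : IsSupersolvable G) [Nontrivial G] :
    ∃ N : Subgroup G, N.Normal ∧ (Nat.card N).Prime := by
  obtain ⟨n, s, h0, hlast, hnorm, hstep⟩ := hG
  cases n with
  | zero => exact absurd (h0.symm.trans hlast) bot_ne_top
  | succ n =>
    refine ⟨s 1, hnorm 1, ?_⟩
    simpa [h0] using (hstep 0).2

variable [Finite G]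

theorem exists_lt_relIndex_prime (hG : IsSupersolvable G) {M : Subgroup G} (hM : M ≠ ⊤) :
    ∃ M', M < M' ∧ (M.relIndex M').Prime := by
  obtain ⟨n, s, h0, hlast, hnorm, hstep⟩ := hG
  by_contra! hno
  suffices hle : ∀ i, s i ≤ M from hM (top_le_iff.mp (hlast ▸ hle (Fin.last n)))
  intro i
  induction i using Fin.induction with
  | zero => exact h0 ▸ bot_le
  | succ i ih =>
    by_contra hN
    have := hnorm i.succ
    have hdvd : (M ⊓ s i.succ).relIndex (s i.succ) ∣ (s i.castSucc).relIndex (s i.succ) :=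
      relIndex_dvd_of_le_left _ (le_inf ih (hstep i).1)
    rcases (hstep i).2.eq_one_or_self_of_dvd _ hdvd with h | h
    · exact hN ((relIndex_eq_one.mp h).trans inf_le_left)
    · refine hno (M ⊔ s i.succ) (left_lt_sup.mpr hN) ?_
      rw [relIndex_sup_eq_inf_relIndex, h]
      exact (hstep i).2

theorem cardFactors_index_le_ncard (hG : IsSupersolvable G) (M : Subgroup G) :
    Ω M.index ≤ {H : Subgroup G | M ≤ H ∧ H ≠ ⊤}.ncard := by
  induction hn : Ω M.index generalizing M with
  | zero => exact Nat.zero_le _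
  | succ n ih =>
    have hM : M ≠ ⊤ := by rintro rfl; simp at hn
    obtain ⟨M', hMM', hp⟩ := hG.exists_lt_relIndex_prime hM
    rw [← relIndex_mul_index hMM'.le, cardFactors_mul hp.ne_zero index_ne_zero_of_finite,
      cardFactors_apply_prime hp] at hn
    calc n + 1 ≤ (insert M {H : Subgroup G | M' ≤ H ∧ H ≠ ⊤}).ncard := by
          rw [Set.ncard_insert_of_notMem fun h => hMM'.not_ge h.1]
          exact Nat.succ_le_succ (ih M' (by omega))
      _ ≤ {H : Subgroup G | M ≤ H ∧ H ≠ ⊤}.ncard :=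
          Set.ncard_le_ncard (Set.insert_subset ⟨le_rfl, hM⟩ fun H hH => ⟨hMM'.le.trans hH.1, hH.2⟩)

theorem exists_ge_ne_top_notMem (hG : IsSupersolvable G) (M : Subgroup G)
    {S : Set (Subgroup G)} (hS : S.ncard + Ω (Nat.card M) < Ω (Nat.card G)) :
    ∃ H, M ≤ H ∧ H ≠ ⊤ ∧ H ∉ S := by
  have hlt : S.ncard < {H : Subgroup G | M ≤ H ∧ H ≠ ⊤}.ncard := by
    have := hG.cardFactors_index_le_ncard M
    have := M.cardFactors_card_add_cardFactors_index
    omega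
  obtain ⟨H, ⟨hMH, hH⟩, hHS⟩ := Set.exists_mem_notMem_of_ncard_lt_ncard hlt
  exact ⟨H, hMH, hH, hHS⟩

theorem exists_ge_inf_ne_bot (hG : IsSupersolvable G) {N : Subgroup G} [N.Normal]
    (hN : (Nat.card N).Prime) {K : Subgroup G} (hK : K ≠ ⊥) {S : Set (Subgroup G)}
    (hS : S.ncard + 2 < Ω (Nat.card G)) : ∃ H, N ≤ H ∧ H ≠ ⊤ ∧ H ∉ S ∧ K ⊓ H ≠ ⊥ := by
  obtain ⟨A, hAK, hA⟩ := exists_le_card_prime hK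
  have hAN : Ω (Nat.card ↥(A ⊔ N)) ≤ 2 := by
    have := cardFactors_card_sup_le A N
    rwa [cardFactors_apply_prime hA, cardFactors_apply_prime hN] at this
  obtain ⟨H, hANH, hH, hHS⟩ := hG.exists_ge_ne_top_notMem (A ⊔ N) (S := S) (by omega)
  refine ⟨H, le_sup_right.trans hANH, hH, hHS, fun hKH => hA.ne_one ?_⟩
  rw [card_eq_one, ← le_bot_iff, ← hKH]
  exact le_inf hAK (le_sup_left.trans hANH)

end IsSupersolvable

lemma interGraph_induce_reachable {G : Type*} [Group G]
    {S : Set {H : Subgroup G // H ≠ ⊥ ∧ H ≠ ⊤}} (u v : ↥Sᶜ) (h : u.1.1 ⊓ v.1.1 ≠ ⊥) :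
    ((interGraph G).induce Sᶜ).Reachable u v := by
  by_cases huv : u = v
  · exact huv ▸ .refl u
  · exact SimpleGraph.Adj.reachable ⟨fun h' => huv (Subtype.ext h'), h⟩

theorem IsSupersolvable.kConnected_interGraph {G : Type*} [Group G] [Finite G]
    (hG : IsSupersolvable G) {k : ℕ} (hk : k + 3 ≤ Ω (Nat.card G)) :
    KConnected (interGraph G) k := by
  have : Nontrivial G :=
    Finite.one_lt_card_iff_nontrivial.mp (cardFactors_pos_iff_one_lt.mp (by omega))
  obtain ⟨N, hNn, hN⟩ := hG.exists_normal_card_prime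
  have hNbot : N ≠ ⊥ := fun h => hN.ne_one (card_eq_one.mpr h)
  constructor
  · have hNindex := N.cardFactors_card_add_cardFactors_index
    rw [cardFactors_apply_prime hN] at hNindex
    calc k < Ω N.index := by omega
      _ ≤ {H : Subgroup G | N ≤ H ∧ H ≠ ⊤}.ncard := hG.cardFactors_index_le_ncard N
      _ ≤ {H : Subgroup G | H ≠ ⊥ ∧ H ≠ ⊤}.ncard :=
          Set.ncard_le_ncard fun H hH => ⟨ne_bot_of_le_ne_bot hNbot hH.1, hH.2⟩
      _ = Nat.card {H : Subgroup G // H ≠ ⊥ ∧ H ≠ ⊤} := rfl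
  · rintro S ⟨a, b, hab⟩
    by_contra! hS
    have hS' : (Subtype.val '' S).ncard + 2 < Ω (Nat.card G) := by
      rw [Set.ncard_image_of_injective S Subtype.val_injective]
      change S.ncard < k at hS
      omega
    have hmeet : ∀ u : ↥Sᶜ, ∃ m : ↥Sᶜ, N ≤ m.1.1 ∧ u.1.1 ⊓ m.1.1 ≠ ⊥ := by
      intro u
      obtain ⟨H, hNH, hH, hHS, huH⟩ := hG.exists_ge_inf_ne_bot hN u.1.2.1 hS'
      exact ⟨⟨⟨H, ne_bot_of_le_ne_bot hNbot hNH, hH⟩, fun hS => hHS ⟨_, hS, rfl⟩⟩, hNH, huH⟩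
    obtain ⟨ma, hNa, ha⟩ := hmeet a
    obtain ⟨mb, hNb, hb⟩ := hmeet b
    have hab' : ma.1.1 ⊓ mb.1.1 ≠ ⊥ := ne_bot_of_le_ne_bot hNbot (le_inf hNa hNb)
    exact hab (((interGraph_induce_reachable a ma ha).trans
      (interGraph_induce_reachable ma mb hab')).trans (interGraph_induce_reachable b mb hb).symm)

theorem stmt17 (G : Type*) [Group G] [Finite G] (hss : IsSupersolvable G) :
    (∀ k : ℕ, k + 3 ≤ (Nat.card G).primeFactorsList.length →
      KConnected (interGraph G) k) ∧
    (∀ p α : ℕ, p.Prime → IsPGroup p G → 2 ≤ α → p ^ α < Nat.card G →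
      KConnected (interGraph G) (α - 2)) := by
  have hconn : ∀ k : ℕ, k + 3 ≤ (Nat.card G).primeFactorsList.length →
      KConnected (interGraph G) k :=
    fun k hk => hss.kConnected_interGraph (cardFactors_apply ▸ hk)
  refine ⟨hconn, fun p α hp hpG hα hcard => hconn _ ?_⟩
  have : Fact p.Prime := ⟨hp⟩
  obtain ⟨β, hβ⟩ := IsPGroup.iff_card.mp hpG
  rw [hβ] at hcard ⊢
  rw [← cardFactors_apply, cardFactors_apply_prime_pow hp]
  have := (Nat.pow_lt_pow_iff_right hp.one_lt).mp hcard
  omega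
end

section
/- Let G be a finite group and N a normal subgroup of G admitting a chain 1 < N₁ < N₂ < … < N_x = N with each N_i normal in G. If the intersection graph of G/N is k-connected, then the intersection graph of G is (k+x−1)-connected. In particular κ(G/N) ≤ κ(G). -/
/-!
Write the chain as `σ 0 < ⋯ < σ y = N`. The proper subgroups containing `σ 0` form a clique, so a
separating set `S` either contains all of them or cuts off a component `P` avoiding them, and then
every proper subgroup outside `P` that meets a member of `P` lies in `S`. In each case `S` contains
more than `m` subgroups strictly above `N` (the preimages of all vertices of `Γ(G/N)`, or of one
vertex and its at least `m` neighbours) and at least `y` further subgroups: if some `H ∈ P` meets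
`N`, the joins `σ i ⊔ L` (`i ≤ y`) with a minimal subgroup `L ≤ H ⊓ N`, which by Dedekind's law
coincide for at most one pair of consecutive indices; otherwise the joins `σ i ⊔ c` (`i < y`) with
some `c ∈ P`, which meet `N` exactly in `σ i`.
-/

theorem Set.ncard_add_ncard_le {α : Type*} [Finite α] {A B S : Set α} (hA : A ⊆ S) (hB : B ⊆ S)
    (hAB : Disjoint A B) : A.ncard + B.ncard ≤ S.ncard :=
  (Set.ncard_union_eq hAB).symm.trans_le (Set.ncard_le_ncard (Set.union_subset hA hB))

open Finset in
theorem Monotone.card_filter_lt_succ_lt_card_image {α : Type*} [Preorder α] [DecidableEq α]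
    [DecidableLT α] {f : ℕ → α} (hf : Monotone f) (n : ℕ) :
    #{i ∈ range n | f i < f (i + 1)} < #((range (n + 1)).image f) := by
  induction n with
  | zero => simp
  | succ n ih =>
    rw [range_add_one, filter_insert, range_add_one, image_insert]
    by_cases hstep : f n < f (n + 1)
    · have hnew : f (n + 1) ∉ (range (n + 1)).image f := by
        simp only [mem_image, mem_range, not_exists, not_and]
        intro i hi hfi
        exact (hf (Nat.lt_succ_iff.1 hi)).not_gt (hfi ▸ hstep)
      rw [if_pos hstep, card_insert_of_notMem (by simp), card_insert_of_notMem hnew]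
      omega
    · rw [if_neg hstep]
      exact ih.trans_le (card_le_card (subset_insert _ _))

namespace Subgroup

variable {G : Type*} [Group G]

theorem sup_inf_assoc_of_le_of_normal {N C : Subgroup G} [N.Normal] (A : Subgroup G)
    (h : N ≤ C) : (N ⊔ A) ⊓ C = N ⊔ A ⊓ C :=
  SetLike.coe_injective <| by
    rw [coe_inf, normal_mul, normal_mul, mul_inf_assoc _ _ _ h]

theorem le_of_le_sup_of_isAtom {A B L : Subgroup G} [A.Normal] (hL : IsAtom L) (hAB : A < B)
    (hB : B ≤ A ⊔ L) : L ≤ B := by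
  have hB_eq : B = A ⊔ L ⊓ B := by
    rw [← sup_inf_assoc_of_le_of_normal L hAB.le, inf_eq_right.2 hB]
  rcases hL.le_iff.1 (inf_le_left : L ⊓ B ≤ L) with h | h
  · rw [h, sup_bot_eq] at hB_eq
    exact absurd hB_eq hAB.ne'
  · exact inf_eq_left.1 h

theorem inf_map_eq_bot_of_comap_inf_eq_bot {H : Type*} [Group H] (f : G →* H)
    {W : Subgroup H} {C : Subgroup G} (h : W.comap f ⊓ C = ⊥) : W ⊓ C.map f = ⊥ := by
  rw [eq_bot_iff]
  rintro _ ⟨hW, c, hc, rfl⟩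
  have : c ∈ W.comap f ⊓ C := ⟨hW, hc⟩
  rw [h, mem_bot] at this
  simp [this]

end Subgroup

section Connectivity

variable {V : Type*} {Γ : SimpleGraph V}

theorem KConnected.mono {k k' : ℕ} (h : KConnected Γ k') (hk : k ≤ k') : KConnected Γ k :=
  ⟨hk.trans_lt h.1, fun S hS => hk.trans (h.2 S hS)⟩

theorem KConnected.le_ncard_neighborSet [Finite V] {k : ℕ} (h : KConnected Γ k) (v : V) :
    k ≤ (Γ.neighborSet v).ncard := by
  by_cases hall : ∀ u ≠ v, Γ.Adj v u
  · have hnbr : Γ.neighborSet v = {v}ᶜ :=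
      Set.ext fun u => ⟨fun hu => (Γ.ne_of_adj hu).symm, hall u⟩
    have := Set.ncard_add_ncard_compl {v}
    rw [Set.ncard_singleton, ← hnbr] at this
    have := h.1
    omega
  · push Not at hall
    obtain ⟨u, huv, hvu⟩ := hall
    rw [← Nat.card_coe_set_eq]
    refine h.2 _ ⟨⟨v, Γ.irrefl⟩, ⟨u, hvu⟩, ?_⟩
    rintro ⟨p⟩
    cases p with
    | nil => exact huv rfl
    | @cons _ w _ hadj _ => exact w.2 hadj

theorem IsSepSet.exists_closed_disjoint {S D : Set V} (hS : IsSepSet Γ S) (hD : Γ.IsClique D)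
    (hDS : ¬ D ⊆ S) :
    ∃ P : Set V, P.Nonempty ∧ Disjoint P D ∧ ∀ v ∈ P, ∀ w ∉ P, Γ.Adj v w → w ∈ S := by
  obtain ⟨d, hdD, hdS⟩ := Set.not_subset.1 hDS
  obtain ⟨a, b, hab⟩ := hS
  obtain ⟨c, hc⟩ : ∃ c : ↥Sᶜ, ¬ (Γ.induce Sᶜ).Reachable c ⟨d, hdS⟩ := by
    by_contra! h
    exact hab ((h a).trans (h b).symm)
  refine ⟨{v | ∃ hv : v ∉ S, (Γ.induce Sᶜ).Reachable c ⟨v, hv⟩}, ⟨c, c.2, .rfl⟩, ?_, ?_⟩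
  · refine Set.disjoint_left.2 fun v ⟨hvS, hcv⟩ hvD => hc ?_
    obtain rfl | hvd := eq_or_ne v d
    · exact hcv
    · exact hcv.trans (SimpleGraph.Adj.reachable (hD hvD hdD hvd))
  · rintro v ⟨hvS, hcv⟩ w hwP hvw
    by_contra hwS
    exact hwP ⟨hwS, hcv.trans (SimpleGraph.Adj.reachable (G := Γ.induce Sᶜ)
      (u := ⟨v, hvS⟩) (v := ⟨w, hwS⟩) hvw)⟩

end Connectivity

theorem KConnected.lt_ncard_inf_ne_bot {H : Type*} [Group H] [Finite H] {m : ℕ}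
    (h : KConnected (interGraph H) m) {Q : Subgroup H} (hQ : Q ≠ ⊥) :
    m < {W : Subgroup H | W ≠ ⊤ ∧ W ⊓ Q ≠ ⊥}.ncard := by
  by_cases hQ_top : Q = ⊤
  · have hset : {W : Subgroup H | W ≠ ⊤ ∧ W ⊓ Q ≠ ⊥} =
        Set.range (Subtype.val : {W : Subgroup H // W ≠ ⊥ ∧ W ≠ ⊤} → Subgroup H) := by
      ext W
      simp [hQ_top, and_comm]
    rw [hset, Set.ncard_range_of_injective Subtype.val_injective]
    exact h.1
  · set q : {W : Subgroup H // W ≠ ⊥ ∧ W ≠ ⊤} := ⟨Q, hQ, hQ_top⟩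
    calc m ≤ ((interGraph H).neighborSet q).ncard := h.le_ncard_neighborSet q
      _ < (insert q ((interGraph H).neighborSet q)).ncard := by
        rw [Set.ncard_insert_of_notMem (show q ∉ _ from (interGraph H).irrefl)]
        omega
      _ = (Subtype.val '' insert q ((interGraph H).neighborSet q)).ncard :=
        (Set.ncard_image_of_injective _ Subtype.val_injective).symm
      _ ≤ _ := by
        refine Set.ncard_le_ncard ?_
        rintro _ ⟨w, hw | hw, rfl⟩
        · subst hw
          exact show Q ≠ ⊤ ∧ Q ⊓ Q ≠ ⊥ by rw [inf_idem]; exact ⟨hQ_top, hQ⟩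
        · exact ⟨w.2.2, by rw [inf_comm]; exact hw.2⟩

theorem KConnected.lt_ncard_of_quotient {G : Type*} [Group G] [Finite G] {N : Subgroup G}
    [N.Normal] {m : ℕ} (h : KConnected (interGraph (G ⧸ N)) m) {C : Subgroup G}
    (hC : ¬ C ≤ N) : m < {K : Subgroup G | N < K ∧ K ≠ ⊤ ∧ K ⊓ C ≠ ⊥}.ncard := by
  set π := QuotientGroup.mk' N
  have hπ : Function.Surjective π := QuotientGroup.mk'_surjective N
  have hQ : C.map π ≠ ⊥ := by
    rwa [Ne, Subgroup.map_eq_bot_iff, QuotientGroup.ker_mk']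
  calc m < {W | W ≠ ⊤ ∧ W ⊓ C.map π ≠ ⊥}.ncard := h.lt_ncard_inf_ne_bot hQ
    _ = (Subgroup.comap π '' {W | W ≠ ⊤ ∧ W ⊓ C.map π ≠ ⊥}).ncard :=
      (Set.ncard_image_of_injective _ (Subgroup.comap_injective hπ)).symm
    _ ≤ _ := by
      refine Set.ncard_le_ncard ?_
      rintro _ ⟨W, ⟨hW_top, hWC⟩, rfl⟩
      have hker : π.ker = N := QuotientGroup.ker_mk' N
      refine ⟨lt_of_le_of_ne (hker.symm.le.trans (π.ker_le_comap W)) ?_, ?_, ?_⟩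
      · intro hN
        have hW : W = ⊥ := Subgroup.comap_injective hπ <| by rw [← hN, MonoidHom.comap_bot, hker]
        exact hWC (by rw [hW, bot_inf_eq])
      · rwa [Ne, ← Subgroup.comap_top π, (Subgroup.comap_injective hπ).eq_iff]
      · exact fun hK => hWC (Subgroup.inf_map_eq_bot_of_comap_inf_eq_bot π hK)

section NormalChain

open Finset

variable {G : Type*} [Group G] [Finite G] {N : Subgroup G} [N.Normal] {σ : ℕ → Subgroup G}
  {y m : ℕ}

theorem add_lt_ncard_of_inf_ne_bot (hσ : Monotone σ) (hσy : StrictMonoOn σ (Set.Iic y))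
    (hσN : σ y = N) (hnormal : ∀ i, (σ i).Normal) (hquot : KConnected (interGraph (G ⧸ N)) m)
    {S : Set (Subgroup G)} {H : Subgroup G} (hHN : H ⊓ N ≠ ⊥)
    (hS : ∀ K, K ≠ ⊤ → σ 0 ≤ K → H ⊓ K ≠ ⊥ → K ∈ S) : m + y < S.ncard := by
  classical
  have hN_top : N ≠ ⊤ := by
    rintro hN
    obtain ⟨⟨W, hW, -⟩⟩ := (Nat.card_pos_iff.1 (Nat.zero_lt_of_lt hquot.1)).1
    have : Subsingleton (G ⧸ N) := hN ▸ QuotientGroup.subsingleton_quotient_top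
    exact hW (Subgroup.eq_bot_of_subsingleton W)
  obtain ⟨L, hL, hLHN⟩ := (eq_bot_or_exists_atom_le (H ⊓ N)).resolve_left hHN
  set T : ℕ → Subgroup G := fun i => σ i ⊔ L
  have hT : Monotone T := fun i j hij => sup_le_sup_right (hσ hij) L
  have hTS : ∀ i ≤ y, T i ∈ S := fun i hi =>
    hS _ (ne_top_of_le_ne_top hN_top (sup_le (hσN ▸ hσ hi) (hLHN.trans inf_le_right)))
      ((hσ i.zero_le).trans le_sup_left)
      (ne_bot_of_le_ne_bot hL.1 (le_inf (hLHN.trans inf_le_left) le_sup_right))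
  -- a flat step `T i = T (i + 1)` forces `L ≤ σ (i + 1)`, after which `T = σ` strictly increases
  have hflat : ∀ i < y, ∀ j < y, T i = T (i + 1) → i < j → T j < T (j + 1) := by
    intro i hi j hj hTi hij
    have := hnormal i
    have hLσ : L ≤ σ (i + 1) := Subgroup.le_of_le_sup_of_isAtom hL
      (hσy hi.le (Nat.succ_le_of_lt hi) (lt_add_one i)) (le_sup_left.trans hTi.ge)
    have hT_eq : ∀ k, i + 1 ≤ k → T k = σ k := fun k hk => sup_eq_left.2 (hLσ.trans (hσ hk))
    rw [hT_eq j hij, hT_eq (j + 1) (by omega)]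
    exact hσy hj.le (Nat.succ_le_of_lt hj) (lt_add_one j)
  have hcard : y ≤ #((range (y + 1)).image T) := by
    have hflat_card : #{i ∈ range y | ¬ T i < T (i + 1)} ≤ 1 := by
      refine card_le_one.2 fun i hi j hj => ?_
      simp only [mem_filter, mem_range] at hi hj
      have hTi := (hT i.le_succ).eq_of_not_lt hi.2
      have hTj := (hT j.le_succ).eq_of_not_lt hj.2
      by_contra hij
      rcases Nat.lt_or_gt_of_ne hij with hij | hij
      · exact hj.2 (hflat i hi.1 j hj.1 hTi hij)
      · exact hi.2 (hflat j hj.1 i hi.1 hTj hij)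
    have := hT.card_filter_lt_succ_lt_card_image y
    have := card_filter_add_card_filter_not (s := range y) (fun i => T i < T (i + 1))
    rw [card_range] at this
    omega
  have hA := hquot.lt_ncard_of_quotient (C := ⊤) (by rwa [top_le_iff])
  have hAS : {K | N < K ∧ K ≠ ⊤ ∧ K ⊓ ⊤ ≠ ⊥} ⊆ S := fun K ⟨hNK, hK, _⟩ =>
    hS K hK ((hσN ▸ hσ y.zero_le).trans hNK.le) (ne_bot_of_le_ne_bot hHN (inf_le_inf_left H hNK.le))
  have hBS : (((range (y + 1)).image T : Finset (Subgroup G)) : Set (Subgroup G)) ⊆ S := by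
    intro K hK
    obtain ⟨i, hi, rfl⟩ := mem_image.1 hK
    exact hTS i (Nat.lt_succ_iff.1 (mem_range.1 hi))
  have hAB : Disjoint {K | N < K ∧ K ≠ ⊤ ∧ K ⊓ ⊤ ≠ ⊥}
      (((range (y + 1)).image T : Finset (Subgroup G)) : Set (Subgroup G)) := by
    refine Set.disjoint_left.2 fun K hK hKT => ?_
    obtain ⟨i, hi, rfl⟩ := mem_image.1 hKT
    exact hK.1.not_ge (sup_le (hσN ▸ hσ (Nat.lt_succ_iff.1 (mem_range.1 hi)))
      (hLHN.trans inf_le_right))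
  have := Set.ncard_add_ncard_le hAS hBS hAB
  rw [Set.ncard_coe_finset] at this
  omega

theorem add_lt_ncard_of_inf_eq_bot (hσy : StrictMonoOn σ (Set.Iic y)) (hσN : σ y = N)
    (hσ0 : σ 0 ≠ ⊥) (hnormal : ∀ i, (σ i).Normal) (hquot : KConnected (interGraph (G ⧸ N)) m)
    {S : Set (Subgroup G)} {c : Subgroup G} (hc : c ≠ ⊥) (hcN : c ⊓ N = ⊥)
    (hS : ∀ K, K ≠ ⊤ → K ⊓ N ≠ ⊥ → c ⊓ K ≠ ⊥ → K ∈ S) : m + y < S.ncard := by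
  classical
  set U : ℕ → Subgroup G := fun i => σ i ⊔ c
  have hσ_lt : ∀ i < y, σ i < N := fun i hi => hσN ▸ hσy hi.le (le_refl y) hi
  have hσ_ne_bot : ∀ i ≤ y, σ i ≠ ⊥ := fun i hi =>
    ne_bot_of_le_ne_bot hσ0 (hσy.monotoneOn (Nat.zero_le y) hi i.zero_le)
  have hUN : ∀ i < y, U i ⊓ N = σ i := fun i hi => by
    have := hnormal i
    rw [Subgroup.sup_inf_assoc_of_le_of_normal c (hσ_lt i hi).le, hcN, sup_bot_eq]
  have hUS : ∀ i < y, U i ∈ S := by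
    intro i hi
    refine hS _ (fun hU => (hσ_lt i hi).ne ?_) ?_ ?_
    · rw [← hUN i hi, hU, top_inf_eq]
    · rw [hUN i hi]
      exact hσ_ne_bot i hi.le
    · rwa [inf_eq_left.2 le_sup_right]
  have hU_inj : Set.InjOn U (range y) := by
    intro i hi j hj hij
    simp only [coe_range, Set.mem_Iio] at hi hj
    exact hσy.injOn hi.le hj.le (by rw [← hUN i hi, ← hUN j hj, hij])
  have hA := hquot.lt_ncard_of_quotient (C := c) fun hcN' => hc (by rwa [inf_eq_left.2 hcN'] at hcN)
  have hAS : {K | N < K ∧ K ≠ ⊤ ∧ K ⊓ c ≠ ⊥} ⊆ S := fun K ⟨hNK, hK, hKc⟩ =>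
    hS K hK (by rw [inf_eq_right.2 hNK.le]; exact hσN ▸ hσ_ne_bot y le_rfl) (by rwa [inf_comm])
  have hBS : (((range y).image U : Finset (Subgroup G)) : Set (Subgroup G)) ⊆ S := by
    intro K hK
    obtain ⟨i, hi, rfl⟩ := mem_image.1 hK
    exact hUS i (mem_range.1 hi)
  have hAB : Disjoint {K | N < K ∧ K ≠ ⊤ ∧ K ⊓ c ≠ ⊥}
      (((range y).image U : Finset (Subgroup G)) : Set (Subgroup G)) := by
    refine Set.disjoint_left.2 fun K hK hKU => ?_
    obtain ⟨i, hi, rfl⟩ := mem_image.1 hKU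
    have hi := mem_range.1 hi
    exact (hσ_lt i hi).ne' (by rw [← hUN i hi, inf_eq_right.2 hK.1.le])
  have := Set.ncard_add_ncard_le hAS hBS hAB
  rw [Set.ncard_coe_finset, card_image_of_injOn hU_inj, card_range] at this
  omega

theorem add_lt_ncard_of_isSepSet (hσ : Monotone σ) (hσy : StrictMonoOn σ (Set.Iic y))
    (hσN : σ y = N) (hσ0 : σ 0 ≠ ⊥) (hnormal : ∀ i, (σ i).Normal)
    (hquot : KConnected (interGraph (G ⧸ N)) m) {S : Set {H : Subgroup G // H ≠ ⊥ ∧ H ≠ ⊤}}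
    (hS : IsSepSet (interGraph G) S) : m + y < (Subtype.val '' S).ncard := by
  have hσ0N : σ 0 ⊓ N ≠ ⊥ := by rwa [inf_eq_left.2 (hσN ▸ hσ y.zero_le)]
  set D : Set {H : Subgroup G // H ≠ ⊥ ∧ H ≠ ⊤} := {v | σ 0 ≤ v.1}
  have hD : (interGraph G).IsClique D := fun v hv w hw hvw =>
    ⟨hvw, ne_bot_of_le_ne_bot hσ0 (le_inf hv hw)⟩
  by_cases hDS : D ⊆ S
  · exact add_lt_ncard_of_inf_ne_bot hσ hσy hσN hnormal hquot hσ0N fun K hK h0 _ =>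
      ⟨⟨K, ne_bot_of_le_ne_bot hσ0 h0, hK⟩, hDS h0, rfl⟩
  obtain ⟨P, ⟨c, hcP⟩, hPD, hPS⟩ := hS.exists_closed_disjoint hD hDS
  have hmem : ∀ v ∈ P, ∀ K, K ≠ ⊤ → v.1 ⊓ K ≠ ⊥ → (∀ w ∈ P, w.1 ≠ K) →
      K ∈ Subtype.val '' S := fun v hv K hK hvK hKP =>
    ⟨⟨K, ne_bot_of_le_ne_bot hvK inf_le_right, hK⟩,
      hPS v hv _ (fun hw => hKP _ hw rfl) ⟨fun h => hKP v hv (congrArg Subtype.val h), hvK⟩, rfl⟩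
  by_cases hPN : ∃ v ∈ P, v.1 ⊓ N ≠ ⊥
  · obtain ⟨v, hvP, hvN⟩ := hPN
    exact add_lt_ncard_of_inf_ne_bot hσ hσy hσN hnormal hquot hvN fun K hK h0 hvK =>
      hmem v hvP K hK hvK fun w hw hwK => Set.disjoint_left.1 hPD hw (hwK ▸ h0 : σ 0 ≤ w.1)
  · push Not at hPN
    exact add_lt_ncard_of_inf_eq_bot hσy hσN hσ0 hnormal hquot c.2.1 (hPN c hcP)
      fun K hK hKN hcK => hmem c hcP K hK hcK fun w hw hwK => hKN (hwK ▸ hPN w hw)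

theorem kConnected_interGraph_of_normal_chain (hσ : Monotone σ)
    (hσy : StrictMonoOn σ (Set.Iic y)) (hσN : σ y = N) (hσ0 : σ 0 ≠ ⊥)
    (hnormal : ∀ i, (σ i).Normal) (hquot : KConnected (interGraph (G ⧸ N)) m) :
    KConnected (interGraph G) (m + y) := by
  refine ⟨?_, fun S hS => ?_⟩
  · have hσ0N : σ 0 ⊓ N ≠ ⊥ := by rwa [inf_eq_left.2 (hσN ▸ hσ y.zero_le)]
    have := add_lt_ncard_of_inf_ne_bot (S := {K | K ≠ ⊥ ∧ K ≠ ⊤}) hσ hσy hσN hnormal hquot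
      hσ0N fun K hK h0 _ => ⟨ne_bot_of_le_ne_bot hσ0 h0, hK⟩
    rwa [← Nat.card_coe_set_eq] at this
  · rw [Nat.card_coe_set_eq, ← Set.ncard_image_of_injective S Subtype.val_injective]
    exact (add_lt_ncard_of_isSepSet hσ hσy hσN hσ0 hnormal hquot hS).le

end NormalChain

theorem stmt18 (G : Type*) [Group G] [Finite G] (N : Subgroup G) [N.Normal]
    (x : ℕ) (hx : 1 ≤ x) (s : Fin x → Subgroup G) (hmono : StrictMono s)
    (hbot : ⊥ < s ⟨0, by omega⟩) (hlast : s ⟨x - 1, by omega⟩ = N)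
    (hnorm : ∀ i, (s i).Normal) (k : ℕ)
    (hquot : KConnected (interGraph (G ⧸ N)) k) :
    KConnected (interGraph G) (k + x - 1) ∧
    ∀ m : ℕ, KConnected (interGraph (G ⧸ N)) m → KConnected (interGraph G) m := by
  set σ : ℕ → Subgroup G := fun i => s ⟨min i (x - 1), by omega⟩
  have hσ : Monotone σ := fun i j hij => hmono.monotone (Fin.mk_le_mk.2 (min_le_min_right _ hij))
  have hσy : StrictMonoOn σ (Set.Iic (x - 1)) := fun i hi j hj hij =>
    hmono (Fin.mk_lt_mk.2 (by rwa [min_eq_left hi, min_eq_left hj]))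
  have hmain : ∀ m, KConnected (interGraph (G ⧸ N)) m →
      KConnected (interGraph G) (m + (x - 1)) := fun m =>
    kConnected_interGraph_of_normal_chain hσ hσy (by simpa [σ] using hlast) hbot.ne'
      (fun i => hnorm _)
  exact ⟨by rw [Nat.add_sub_assoc hx]; exact hmain k hquot,
    fun m hm => (hmain m hm).mono (Nat.le_add_right m _)⟩
end

section
/- Let G be a finite nilpotent group of order p³q for distinct primes p, q such that Γ(G) is not 3-connected. Then G is cyclic, i.e. G ≅ ℤ_{p³q}. -/
/-!
Write `G = P × Q` with `P` the Sylow `p`-subgroup and `|Q| = q`. Every subgroup either lies in `P`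
or contains `Q`, and by Dedekind's law `(A ⊔ Q) ⊓ P = A` for `A ≤ P`. Delete at most two vertices.
If `P` survives, every other survivor except `Q` meets `P`, and `Q` reaches `P` through one of the
vertices `A ⊔ Q` with `⊥ < A < P`, of which there are at least three. If `P` is deleted, the
survivors containing `Q` form a clique, and a survivor `A < P` reaches it through `A ⊔ Q`, or, if
that is the other deleted vertex, through some `B < P` meeting `A` and then `B ⊔ Q`.

If `G` is not cyclic then neither is `P`, and a non-cyclic group of order `p³` has at least three
non-trivial proper subgroups; each of them is comparable with another one.
-/

open Set Subgroup Pointwise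

theorem Subgroup.sup_inf_assoc_of_le_of_normal_s19 {G : Type*} [Group G] {A C : Subgroup G}
    (N : Subgroup G) [N.Normal] (h : A ≤ C) : (A ⊔ N) ⊓ C = A ⊔ N ⊓ C := by
  refine le_antisymm (fun x hx => ?_)
    (le_inf (sup_le_sup_left inf_le_left A) (sup_le h inf_le_right))
  have hx' : x ∈ (A : Set G) * (N : Set G) ∩ (C : Set G) :=
    ⟨mul_normal A N ▸ (mem_inf.1 hx).1, (mem_inf.1 hx).2⟩
  rw [← mul_inf_assoc A N C h] at hx'
  obtain ⟨a, ha, n, hn, rfl⟩ := hx'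
  exact mul_mem_sup ha hn

theorem Set.notMem_of_encard_le_two {α : Type*} {s : Set α} {a b c : α} (hs : s.encard ≤ 2)
    (ha : a ∈ s) (hb : b ∈ s) (hab : a ≠ b) (hca : c ≠ a) (hcb : c ≠ b) : c ∉ s := by
  intro hc
  have h3 : ({c, a, b} : Set α).encard = 3 := encard_eq_three.2 ⟨c, a, b, hca, hcb, hab, rfl⟩
  have hle := h3 ▸
    encard_le_encard (insert_subset hc (insert_subset ha (singleton_subset_iff.2 hb)))
  exact absurd (hle.trans hs) (by norm_num)

theorem kConnected_three_of_preconnected_induce {V : Type*} [Finite V] {Γ : SimpleGraph V}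
    (hV : 3 < Nat.card V) (h : ∀ S : Set V, S.encard ≤ 2 → (Γ.induce Sᶜ).Preconnected) :
    KConnected Γ 3 := by
  refine ⟨hV, fun S ⟨a, b, hab⟩ => ?_⟩
  by_contra! hS
  refine hab (h S ?_ a b)
  rw [← S.toFinite.cast_ncard_eq, ← Nat.card_coe_set_eq]
  exact_mod_cast (by omega : Nat.card S ≤ 2)

section IntersectionGraph

variable {G : Type*} [Group G] {P Q : Subgroup G}

theorem three_lt_card_interGraph_vertices [Finite G] (hPQ : Disjoint P Q) (hQ : Q ≠ ⊥)
    (hIoo : 2 < (Ioo ⊥ P).encard) : 3 < Nat.card {H : Subgroup G // H ≠ ⊥ ∧ H ≠ ⊤} := by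
  obtain ⟨A, hA⟩ := nonempty_of_encard_ne_zero (pos_of_gt hIoo).ne'
  have hsub : insert Q (Ioo ⊥ P) ⊆ {H : Subgroup G | H ≠ ⊥ ∧ H ≠ ⊤} :=
    insert_subset ⟨hQ, fun h => (hA.1.trans hA.2).ne' (hPQ.eq_bot_of_le (h ▸ le_top))⟩
      fun B hB => ⟨hB.1.ne', hB.2.ne_top⟩
  have h₁ : 2 < (Ioo ⊥ P).ncard := by rwa [← Nat.cast_lt (α := ℕ∞), (toFinite _).cast_ncard_eq]
  have h₂ : (Ioo ⊥ P).ncard + 1 ≤ {H : Subgroup G | H ≠ ⊥ ∧ H ≠ ⊤}.ncard := by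
    rw [← ncard_insert_of_notMem fun h => hQ (hPQ.symm.eq_bot_of_le h.2.le)]
    exact ncard_le_ncard hsub
  show 3 < Nat.card ↥{H : Subgroup G | H ≠ ⊥ ∧ H ≠ ⊤}
  rw [Nat.card_coe_set_eq]
  omega

variable {S : Set {H : Subgroup G // H ≠ ⊥ ∧ H ≠ ⊤}}

theorem interGraph_induce_reachable_of_inf_ne_bot {a b : ↥Sᶜ} (h : a.1.1 ⊓ b.1.1 ≠ ⊥) :
    ((interGraph G).induce Sᶜ).Reachable a b := by
  by_cases hab : a = b
  · exact hab ▸ .rfl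
  · exact SimpleGraph.Adj.reachable ⟨fun h' => hab (Subtype.ext h'), h⟩

variable [Q.Normal]

theorem sup_inf_eq_self_of_disjoint (hPQ : Disjoint P Q) {A : Subgroup G} (hA : A ≤ P) :
    (A ⊔ Q) ⊓ P = A := by
  rw [sup_inf_assoc_of_le_of_normal_s19 Q hA, hPQ.symm.eq_bot, sup_bot_eq]

theorem injOn_sup_of_disjoint (hPQ : Disjoint P Q) : InjOn (· ⊔ Q) (Iic P) :=
  fun A hA B hB h => by
    rw [← sup_inf_eq_self_of_disjoint hPQ hA, ← sup_inf_eq_self_of_disjoint hPQ hB]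
    exact congrArg (· ⊓ P) h

theorem sup_ne_top_of_disjoint (hPQ : Disjoint P Q) {A : Subgroup G} (hA : A < P) : A ⊔ Q ≠ ⊤ :=
  fun h => hA.ne (by rw [← sup_inf_eq_self_of_disjoint hPQ hA.le, h, top_inf_eq])

theorem interGraph_induce_preconnected_of_notMem (hPQ : Disjoint P Q) (hQ : Q ≠ ⊥)
    (hle_or_le : ∀ H : Subgroup G, H ≤ P ∨ Q ≤ H) (hIoo : 2 < (Ioo ⊥ P).encard)
    (hS : S.encard ≤ 2) (vP : ↥Sᶜ) (hvP : vP.1.1 = P) :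
    ((interGraph G).induce Sᶜ).Preconnected := by
  suffices hub : ∀ w : ↥Sᶜ, ((interGraph G).induce Sᶜ).Reachable w vP from
    fun a b => (hub a).trans (hub b).symm
  intro w
  by_cases hw : w.1.1 ⊓ P = ⊥
  swap
  · exact interGraph_induce_reachable_of_inf_ne_bot (hvP ▸ hw)
  have hQw : Q ≤ w.1.1 := (hle_or_le _).resolve_left fun h => w.1.2.1 (inf_eq_left.2 h ▸ hw)
  obtain ⟨A, hA, hAS⟩ : ∃ A ∈ Ioo ⊥ P, A ⊔ Q ∉ Subtype.val '' S := by
    by_contra! h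
    have hle := encard_le_encard (t := Subtype.val '' S) (image_subset_iff.2 h)
    rw [(injOn_sup_of_disjoint hPQ).mono (fun _ hA => hA.2.le) |>.encard_image,
      Subtype.val_injective.encard_image] at hle
    exact absurd (hle.trans hS) hIoo.not_ge
  let c : ↥Sᶜ := ⟨⟨A ⊔ Q, ne_bot_of_le_ne_bot hQ le_sup_right, sup_ne_top_of_disjoint hPQ hA.2⟩,
    fun h => hAS ⟨_, h, rfl⟩⟩
  refine (interGraph_induce_reachable_of_inf_ne_bot (b := c) ?_).trans
    (interGraph_induce_reachable_of_inf_ne_bot ?_)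
  · exact ne_bot_of_le_ne_bot hQ (le_inf hQw le_sup_right)
  · rw [hvP, sup_inf_eq_self_of_disjoint hPQ hA.2.le]
    exact hA.1.ne'

theorem exists_reachable_ge_of_sup_notMem (hPQ : Disjoint P Q) (hQ : Q ≠ ⊥) {v : ↥Sᶜ}
    (hvP : v.1.1 < P) (hvS : v.1.1 ⊔ Q ∉ Subtype.val '' S) :
    ∃ c : ↥Sᶜ, Q ≤ c.1.1 ∧ ((interGraph G).induce Sᶜ).Reachable v c := by
  let c : ↥Sᶜ := ⟨⟨v.1.1 ⊔ Q, ne_bot_of_le_ne_bot hQ le_sup_right, sup_ne_top_of_disjoint hPQ hvP⟩,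
    fun h => hvS ⟨_, h, rfl⟩⟩
  refine ⟨c, le_sup_right, interGraph_induce_reachable_of_inf_ne_bot ?_⟩
  rw [inf_eq_left.2 le_sup_left]
  exact v.1.2.1

theorem interGraph_induce_preconnected_of_mem (hPQ : Disjoint P Q) (hQ : Q ≠ ⊥)
    (hle_or_le : ∀ H : Subgroup G, H ≤ P ∨ Q ≤ H)
    (hnbr : ∀ A ∈ Ioo ⊥ P, ∃ B ∈ Ioo ⊥ P, B ≠ A ∧ A ⊓ B ≠ ⊥) (hS : S.encard ≤ 2)
    (vP : {H : Subgroup G // H ≠ ⊥ ∧ H ≠ ⊤}) (hvP : vP.1 = P) (hPS : vP ∈ S) :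
    ((interGraph G).induce Sᶜ).Preconnected := by
  have sep : ∀ {B H : Subgroup G}, B ≤ P → Q ≤ H → B ≠ H := fun hB hH h =>
    hQ (hPQ.symm.eq_bot_of_le ((h ▸ hH).trans hB))
  suffices hup : ∀ w : ↥Sᶜ, ∃ c : ↥Sᶜ, Q ≤ c.1.1 ∧ ((interGraph G).induce Sᶜ).Reachable w c by
    intro a b
    obtain ⟨c, hc, hac⟩ := hup a
    obtain ⟨d, hd, hbd⟩ := hup b
    have hcd := interGraph_induce_reachable_of_inf_ne_bot (a := c) (b := d)
      (ne_bot_of_le_ne_bot hQ (le_inf hc hd))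
    exact hac.trans (hcd.trans hbd.symm)
  intro w
  rcases hle_or_le w.1.1 with hwP | hQw
  swap
  · exact ⟨w, hQw, .rfl⟩
  have hwP' : w.1.1 < P := hwP.lt_of_ne fun h => w.2 (Subtype.ext (h.trans hvP.symm) ▸ hPS)
  by_cases hwS : w.1.1 ⊔ Q ∈ Subtype.val '' S
  swap
  · exact exists_reachable_ge_of_sup_notMem hPQ hQ hwP' hwS
  -- Now `S` consists of `P` and `w ⊔ Q`, so a neighbour `B < P` of `w` and `B ⊔ Q` both survive.
  obtain ⟨u, huS, hu⟩ := hwS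
  have hPu : vP ≠ u := fun h => sep le_rfl le_sup_right (hvP.symm.trans ((congrArg _ h).trans hu))
  have notMem : ∀ v, v.1 ≠ P → v.1 ≠ w.1.1 ⊔ Q → v ∉ S := fun v h₁ h₂ =>
    Set.notMem_of_encard_le_two hS hPS huS hPu (fun h => h₁ (h ▸ hvP)) (fun h => h₂ (h ▸ hu))
  obtain ⟨B, hB, hBw, hwB⟩ := hnbr _ ⟨bot_lt_iff_ne_bot.2 w.1.2.1, hwP'⟩
  let vB : ↥Sᶜ := ⟨⟨B, hB.1.ne', hB.2.ne_top⟩, notMem _ hB.2.ne (sep hB.2.le le_sup_right)⟩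
  obtain ⟨c, hc, hBc⟩ := exists_reachable_ge_of_sup_notMem hPQ hQ (v := vB) hB.2
    fun ⟨v, hvS, hv⟩ => notMem v (hv ▸ (sep le_rfl le_sup_right).symm)
      (hv ▸ fun h => hBw (injOn_sup_of_disjoint hPQ hB.2.le hwP h)) hvS
  exact ⟨c, hc, (interGraph_induce_reachable_of_inf_ne_bot (b := vB) hwB).trans hBc⟩

theorem interGraph_kConnected_three [Finite G] (hPQ : Disjoint P Q) (hQ : Q ≠ ⊥)
    (hle_or_le : ∀ H : Subgroup G, H ≤ P ∨ Q ≤ H) (hIoo : 2 < (Ioo ⊥ P).encard)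
    (hnbr : ∀ A ∈ Ioo ⊥ P, ∃ B ∈ Ioo ⊥ P, B ≠ A ∧ A ⊓ B ≠ ⊥) :
    KConnected (interGraph G) 3 := by
  obtain ⟨A, hA⟩ := nonempty_of_encard_ne_zero (pos_of_gt hIoo).ne'
  let vP : {H : Subgroup G // H ≠ ⊥ ∧ H ≠ ⊤} :=
    ⟨P, (hA.1.trans hA.2).ne', fun h => hQ (hPQ.symm.eq_bot_of_le (h ▸ le_top))⟩
  refine kConnected_three_of_preconnected_induce
    (three_lt_card_interGraph_vertices hPQ hQ hIoo) fun S hS => ?_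
  by_cases hPS : vP ∈ S
  · exact interGraph_induce_preconnected_of_mem hPQ hQ hle_or_le hnbr hS vP rfl hPS
  · exact interGraph_induce_preconnected_of_notMem hPQ hQ hle_or_le hIoo hS ⟨vP, hPS⟩ rfl

end IntersectionGraph

theorem Sylow.le_of_isPGroup {G : Type*} [Group G] {p : ℕ} (P : Sylow p G) [P.Normal]
    {H : Subgroup G} (hH : IsPGroup p H) : H ≤ P :=
  le_sup_left.trans (P.is_maximal' (hH.to_sup_of_normal_right P.isPGroup') le_sup_right).le

theorem Subgroup.ne_of_card_eq_prime_pow {G : Type*} [Group G] {p : ℕ} [Fact p.Prime]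
    {H K : Subgroup G} {a b : ℕ} (hH : Nat.card H = p ^ a) (hK : Nat.card K = p ^ b)
    (hab : a ≠ b) : H ≠ K := fun h =>
  hab (Nat.pow_right_injective (Fact.out : p.Prime).two_le (hH.symm.trans (h ▸ hK)))

section FiniteGroup

variable {G : Type*} [Group G] [Finite G]

theorem isCyclic_of_isCyclic_of_normal {P Q : Subgroup G} [P.Normal] [Q.Normal] [IsCyclic P]
    [IsCyclic Q] (hcop : (Nat.card P).Coprime (Nat.card Q))
    (hG : Nat.card G = Nat.card P * Nat.card Q) : IsCyclic G := by
  have hdisj := disjoint_of_coprime_natCard hcop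
  obtain ⟨g, rfl⟩ := P.isCyclic_iff_exists_zpowers_eq_top.1 ‹_›
  obtain ⟨h, rfl⟩ := Q.isCyclic_iff_exists_zpowers_eq_top.1 ‹_›
  rw [Nat.card_zpowers, Nat.card_zpowers] at hcop hG
  have hgh : Commute g h :=
    commute_of_normal_of_disjoint _ _ ‹_› ‹_› hdisj g h (mem_zpowers g) (mem_zpowers h)
  exact isCyclic_of_orderOf_eq_card (g * h)
    (by rw [hgh.orderOf_mul_eq_mul_orderOf_of_coprime hcop, hG])

variable {p : ℕ} [Fact p.Prime]

theorem Subgroup.exists_le_card_eq_prime {H : Subgroup G} (hH : p ∣ Nat.card H) :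
    ∃ B ≤ H, Nat.card B = p := by
  obtain ⟨x, hx⟩ := exists_prime_orderOf_dvd_card' p hH
  exact ⟨zpowers (x : G), zpowers_le.2 x.2, by rw [Nat.card_zpowers, orderOf_coe, hx]⟩

theorem Sylow.le_of_dvd_card (P : Sylow p G) [P.Normal] (hP : Nat.card P = p) {H : Subgroup G}
    (hH : p ∣ Nat.card H) : (P : Subgroup G) ≤ H := by
  obtain ⟨B, hBH, hB⟩ := exists_le_card_eq_prime hH
  have hBP : B ≤ P := P.le_of_isPGroup (.of_card (n := 1) (by rw [hB, pow_one]))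
  exact (eq_of_le_of_card_ge hBP (hP.trans hB.symm).le) ▸ hBH

theorem Sylow.le_or_le_of_card_eq_pow_mul {q n : ℕ} [Fact q.Prime] (P : Sylow p G)
    (Q : Sylow q G) [P.Normal] [Q.Normal] (hG : Nat.card G = p ^ n * q) (hQ : Nat.card Q = q)
    (H : Subgroup G) : H ≤ P ∨ (Q : Subgroup G) ≤ H := by
  by_cases hqH : q ∣ Nat.card H
  · exact .inr (Q.le_of_dvd_card hQ hqH)
  · refine .inl (P.le_of_isPGroup ?_)
    have hcop : (Nat.card H).Coprime q := ((Nat.Prime.coprime_iff_not_dvd Fact.out).2 hqH).symm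
    obtain ⟨k, -, hk⟩ := (Nat.dvd_prime_pow Fact.out).1
      (hcop.dvd_of_dvd_mul_right (hG ▸ H.card_subgroup_dvd_card))
    exact .of_card hk

section OrderPCube

variable (P : Sylow p G) [P.Normal] (hP : Nat.card P = p ^ 3)
include hP

theorem Sylow.exists_card_eq_sq_lt {A : Subgroup G} (hA : Nat.card A = p) :
    ∃ M : Subgroup G, Nat.card M = p ^ 2 ∧ A ≤ M ∧ M < P := by
  have hp2 : p ^ 2 ∣ Nat.card G :=
    (pow_dvd_pow p (by norm_num)).trans (hP ▸ P.1.card_subgroup_dvd_card)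
  obtain ⟨M, hM, hAM⟩ := Sylow.exists_subgroup_card_pow_succ hp2 (hA.trans (pow_one p).symm)
  exact ⟨M, hM, hAM,
    (P.le_of_isPGroup (.of_card hM)).lt_of_ne (ne_of_card_eq_prime_pow hM hP (by norm_num))⟩

theorem Sylow.exists_mem_Ioo_inf_ne_bot (A : Subgroup G) (hA : A ∈ Ioo ⊥ (P : Subgroup G)) :
    ∃ B ∈ Ioo ⊥ (P : Subgroup G), B ≠ A ∧ A ⊓ B ≠ ⊥ := by
  obtain ⟨k, hkle, hk⟩ := (Nat.dvd_prime_pow Fact.out).1 (hP ▸ card_dvd_of_le hA.2.le)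
  have hk0 : k ≠ 0 := by
    rintro rfl
    exact hA.1.ne' (card_eq_one.1 hk)
  have hk3 : k ≠ 3 := by
    rintro rfl
    exact hA.2.ne (eq_of_le_of_card_ge hA.2.le (hP.trans hk.symm).le)
  obtain rfl | rfl : k = 1 ∨ k = 2 := by omega
  · obtain ⟨M, hM, hAM, hMP⟩ := P.exists_card_eq_sq_lt hP (hk.trans (pow_one p))
    refine ⟨M, ⟨hA.1.trans_le hAM, hMP⟩, ne_of_card_eq_prime_pow hM hk (by norm_num), ?_⟩
    rw [inf_eq_left.2 hAM]
    exact hA.1.ne'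
  · obtain ⟨B, hBA, hB⟩ := exists_le_card_eq_prime (hk ▸ dvd_pow_self p two_ne_zero)
    have hB0 : B ≠ ⊥ := (one_lt_card_iff_ne_bot B).1 (hB ▸ (Fact.out : p.Prime).one_lt)
    refine ⟨B, ⟨bot_lt_iff_ne_bot.2 hB0, hBA.trans_lt hA.2⟩,
      ne_of_card_eq_prime_pow (hB.trans (pow_one p).symm) hk (by norm_num), ?_⟩
    rw [inf_eq_right.2 hBA]
    exact hB0

theorem Sylow.two_lt_encard_Ioo (hcyc : ¬ IsCyclic P) : 2 < (Ioo ⊥ (P : Subgroup G)).encard := by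
  obtain ⟨B, -, hB⟩ := exists_le_card_eq_prime (hP ▸ dvd_pow_self p three_ne_zero)
  obtain ⟨M, hM, hBM, hMP⟩ := P.exists_card_eq_sq_lt hP hB
  have hB0 : ⊥ < B :=
    bot_lt_iff_ne_bot.2 ((one_lt_card_iff_ne_bot B).1 (hB ▸ (Fact.out : p.Prime).one_lt))
  obtain ⟨y, hyP, hyM⟩ := SetLike.exists_of_lt hMP
  have hY : zpowers y ∈ Ioo ⊥ (P : Subgroup G) :=
    ⟨bot_lt_iff_ne_bot.2 (zpowers_ne_bot.2 fun h => hyM (h ▸ M.one_mem)),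
      (zpowers_le.2 hyP).lt_of_ne fun h => hcyc (P.1.isCyclic_iff_exists_zpowers_eq_top.2 ⟨y, h⟩)⟩
  have h3 : ({B, M, zpowers y} : Set (Subgroup G)).encard = 3 := encard_eq_three.2
    ⟨B, M, zpowers y, ne_of_card_eq_prime_pow (hB.trans (pow_one p).symm) hM (by norm_num),
      fun h => hyM (hBM (h ▸ mem_zpowers y)), fun h => hyM (h ▸ mem_zpowers y), rfl⟩
  calc (2 : ℕ∞) < 3 := by norm_num
    _ = _ := h3.symm
    _ ≤ _ := encard_le_encard <| insert_subset (show B ∈ Ioo ⊥ (P : Subgroup G) from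
      ⟨hB0, hBM.trans_lt hMP⟩) <| insert_subset (show M ∈ Ioo ⊥ (P : Subgroup G) from
      ⟨hB0.trans_le hBM, hMP⟩) (singleton_subset_iff.2 hY)

end OrderPCube

end FiniteGroup

theorem stmt19 (G : Type*) [Group G] [Finite G] [Group.IsNilpotent G]
    (p q : ℕ) (hp : p.Prime) (hq : q.Prime) (hpq : p ≠ q)
    (hcard : Nat.card G = p ^ 3 * q)
    (h3 : ¬ KConnected (interGraph G) 3) :
    IsCyclic G ∧ Nonempty (G ≃* Multiplicative (ZMod (p ^ 3 * q))) := by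
  by_cases hcyc : IsCyclic G
  · exact ⟨hcyc, ⟨hcard ▸ (zmodCyclicMulEquiv hcyc).symm⟩⟩
  refine absurd ?_ h3
  have := Fact.mk hp
  have := Fact.mk hq
  obtain ⟨P⟩ : Nonempty (Sylow p G) := inferInstance
  obtain ⟨Q⟩ : Nonempty (Sylow q G) := inferInstance
  have hP : Nat.card P = p ^ 3 := by
    simp [P.card_eq_multiplicity, hcard, Nat.factorization_mul, hp.ne_zero, hq.ne_zero,
      hp.factorization, hq.factorization, hpq.symm]
  have hQ : Nat.card Q = q := by
    simp [Q.card_eq_multiplicity, hcard, Nat.factorization_mul, hp.ne_zero, hq.ne_zero,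
      hp.factorization, hq.factorization, hpq]
  have hcop : (Nat.card P).Coprime (Nat.card Q) := by
    rw [hP, hQ]
    exact ((Nat.coprime_primes hp hq).2 hpq).pow_left 3
  have hPcyc : ¬ IsCyclic P := fun _ =>
    have := isCyclic_of_prime_card hQ
    hcyc (isCyclic_of_isCyclic_of_normal hcop (by rw [hcard, hP, hQ]))
  exact interGraph_kConnected_three (disjoint_of_coprime_natCard hcop)
    (Q.ne_bot_of_dvd_card (hcard ▸ dvd_mul_left q _)) (P.le_or_le_of_card_eq_pow_mul Q hcard hQ)
    (P.two_lt_encard_Ioo hP hPcyc) (P.exists_mem_Ioo_inf_ne_bot hP)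
end
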